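/- arXiv:2104.13550 — 9 statements merged into one kernel-verified Lean document; each statement's English description precedes it below -/
import Mathlib

section
/- Let γ > 0, n ≥ 1, m, p ≥ 1, b₁, b₂ ∈ {0,1}. Let S_r be an m × p real matrix with an SVD of rank q_r given by (Û_r, Σ̂_r, V̂_r, Ŭ_r, V̆_r), and let S_d = S_d(n; b₁, b₂) with an SVD of rank q_d given by (Û_d, Σ̂_d, V̂_d, Ŭ_d, V̆_d). Set S = [γ I_n ⊗ S_r, S_d ⊗ I_m], let Σ̃ be the (q_d q_r) × (q_d q_r) positive diagonal matrix with Σ̃² = Σ̂_d² ⊗ I_{q_r} + I_{q_d} ⊗ γ²Σ̂_r², and define Û = [Û_d ⊗ Û_r, Û_d ⊗ Ŭ_r, Ŭ_d ⊗ Û_r], Ŭ = Ŭ_d ⊗ Ŭ_r, Σ̂ = blockdiag(Σ̃, Σ̂_d ⊗ I_{m−q_r}, γ I_{n−q_d} ⊗ Σ̂_r), V̂ = [[γ(Û_d ⊗ V̂_rΣ̂_r)Σ̃⁻¹, 0, Ŭ_d ⊗ V̂_r], [(V̂_dΣ̂_d ⊗ Û_r)Σ̃⁻¹, V̂_d ⊗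 Ŭ_r, 0]] (top block row with np rows, bottom with (n+1)m rows), and V̆ = [[(Û_dΣ̂_d ⊗ V̂_r)Σ̃⁻¹, Û_d ⊗ V̆_r, 0], [−γ(V̂_d ⊗ Û_rΣ̂_r)Σ̃⁻¹, 0, V̆_d ⊗ [Û_r, Ŭ_r]]]. Then: (i) the nm × nm matrix [Û, Ŭ] is orthogonal; (ii) V̂ᵀV̂ = I, V̆ᵀV̆ = I, and V̂ᵀV̆ = 0; (iii) S = Û Σ̂ V̂ᵀ; (iv) S V̆ = 0 and Sᵀ Ŭ = 0. In particular this exhibits a singular value decomposition of S for every γ > 0. -/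
/-!
Write `[Û_r, Ŭ_r]`, `[V̂_r, V̆_r]`, `[Û_d, Ŭ_d]`, `[V̂_d, V̆_d]` for the orthogonal factors of
the two given SVDs. Through `(A ⊗ B)ᵀ (C ⊗ D) = AᵀC ⊗ BᵀD`, every block of the claimed identities reduces
to the orthonormality and completeness relations of these four splittings, except in the first
block columns of `V̂` and `V̆`, where both Kronecker summands of `S` meet. Before the scaling by
`Σ̃⁻¹`, each of these two block columns has Gram matrix `Σ̂_d² ⊗ I + I ⊗ γ²Σ̂_r² = Σ̃²`, and they
are orthogonal to each other because the two cross terms `±γ Σ̂_d ⊗ Σ̂_r` cancel.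
-/

open Matrix
open scoped Kronecker Matrix

noncomputable section

/-- The diffusion-only stoichiometry matrix `S_d(n; b₁, b₂)` (entries indexed from 1 in the
paper; here rows `i : Fin n` and columns `j : Fin (n+1)` are indexed from 0). -/
def Sd (n : ℕ) (b₁ b₂ : ℝ) : Matrix (Fin n) (Fin (n+1)) ℝ :=
  Matrix.of fun i j =>
    if (j : ℕ) = (i : ℕ) ∧ (i : ℕ) = 0 then b₁
    else if (j : ℕ) = (i : ℕ) then 1
    else if (j : ℕ) = (i : ℕ) + 1 ∧ (i : ℕ) = n - 1 then -b₂
    else if (j : ℕ) = (i : ℕ) + 1 then (-1 : ℝ)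
    else 0

namespace Matrix

variable {R l m n p m₁ m₂ n₁ n₂ : Type*}

theorem fromRows_fromCols_eq_fromCols_fromRows (A : Matrix m₁ n₁ R) (B : Matrix m₁ n₂ R)
    (C : Matrix m₂ n₁ R) (D : Matrix m₂ n₂ R) :
    fromRows (fromCols A B) (fromCols C D) = fromCols (fromRows A C) (fromRows B D) := by
  rw [fromRows_fromCols_eq_fromBlocks, fromCols_fromRows_eq_fromBlocks]

section Semiring

variable [Semiring R]

theorem fromCols_add (A₁ B₁ : Matrix m n₁ R) (A₂ B₂ : Matrix m n₂ R) :
    fromCols A₁ A₂ + fromCols B₁ B₂ = fromCols (A₁ + B₁) (A₂ + B₂) := by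
  ext i (j | j) <;> rfl

theorem fromCols_eq_zero_iff {A : Matrix m n₁ R} {B : Matrix m n₂ R} :
    fromCols A B = 0 ↔ A = 0 ∧ B = 0 := by
  rw [← fromCols_zero, fromCols_ext_iff]

theorem fromRows_eq_zero_iff {A : Matrix m₁ n R} {B : Matrix m₂ n R} :
    fromRows A B = 0 ↔ A = 0 ∧ B = 0 := by
  rw [← fromRows_zero (R := R), fromRows_ext_iff]

theorem fromBlocks_eq_zero_iff {A : Matrix m₁ n₁ R} {B : Matrix m₁ n₂ R} {C : Matrix m₂ n₁ R}
    {D : Matrix m₂ n₂ R} : fromBlocks A B C D = 0 ↔ A = 0 ∧ B = 0 ∧ C = 0 ∧ D = 0 := by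
  rw [← fromBlocks_zero, fromBlocks_inj]

theorem transpose_fromCols_mul_fromCols [Fintype m] (A₁ : Matrix m n₁ R) (A₂ : Matrix m n₂ R)
    (B₁ : Matrix m m₁ R) (B₂ : Matrix m m₂ R) :
    (fromCols A₁ A₂)ᵀ * fromCols B₁ B₂ =
      fromBlocks (A₁ᵀ * B₁) (A₁ᵀ * B₂) (A₂ᵀ * B₁) (A₂ᵀ * B₂) := by
  rw [transpose_fromCols, fromRows_mul_fromCols]

theorem transpose_fromCols_mul_fromCols_eq_zero_iff [Fintype m] {A₁ : Matrix m n₁ R}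
    {A₂ : Matrix m n₂ R} {B₁ : Matrix m m₁ R} {B₂ : Matrix m m₂ R} :
    (fromCols A₁ A₂)ᵀ * fromCols B₁ B₂ = 0 ↔
      A₁ᵀ * B₁ = 0 ∧ A₁ᵀ * B₂ = 0 ∧ A₂ᵀ * B₁ = 0 ∧ A₂ᵀ * B₂ = 0 := by
  rw [transpose_fromCols_mul_fromCols, fromBlocks_eq_zero_iff]

theorem transpose_fromRows_mul_fromRows [Fintype m₁] [Fintype m₂] (A₁ : Matrix m₁ n R)
    (A₂ : Matrix m₂ n R) (B₁ : Matrix m₁ p R) (B₂ : Matrix m₂ p R) :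
    (fromRows A₁ A₂)ᵀ * fromRows B₁ B₂ = A₁ᵀ * B₁ + A₂ᵀ * B₂ := by
  rw [transpose_fromRows, fromCols_mul_fromRows]

theorem fromCols_mul_transpose_fromCols [Fintype n₁] [Fintype n₂] (A₁ : Matrix m n₁ R)
    (A₂ : Matrix m n₂ R) (B₁ : Matrix p n₁ R) (B₂ : Matrix p n₂ R) :
    fromCols A₁ A₂ * (fromCols B₁ B₂)ᵀ = A₁ * B₁ᵀ + A₂ * B₂ᵀ := by
  rw [transpose_fromCols, fromCols_mul_fromRows]

theorem transpose_mul_mul_right [Fintype m] [Fintype n] (A : Matrix m p R) (B : Matrix m n R)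
    (C : Matrix n l R) : Aᵀ * (B * C) = Aᵀ * B * C :=
  (Matrix.mul_assoc _ _ _).symm

end Semiring

section CommSemiring

variable [CommSemiring R]

theorem transpose_mul_mul_left [Fintype m] [Fintype n] (A : Matrix m n R) (B : Matrix n p R)
    (C : Matrix m l R) : (A * B)ᵀ * C = Bᵀ * (Aᵀ * C) := by
  rw [transpose_mul, Matrix.mul_assoc]

theorem transpose_mul_self_mul_of_orthonormal [Fintype m] [Fintype n] [DecidableEq n]
    {U : Matrix m n R} (hU : Uᵀ * U = 1) (M : Matrix n p R) : (U * M)ᵀ * (U * M) = Mᵀ * M := by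
  rw [transpose_mul_mul_left, transpose_mul_mul_right U U M, hU, Matrix.one_mul]

theorem transpose_kronecker_mul_kronecker [Fintype l] [Fintype n] (A : Matrix l m R)
    (B : Matrix n p R) (C : Matrix l m₁ R) (D : Matrix n n₁ R) :
    (A ⊗ₖ B)ᵀ * (C ⊗ₖ D) = (Aᵀ * C) ⊗ₖ (Bᵀ * D) := by
  rw [← kroneckerMap_transpose, mul_kronecker_mul]

theorem kronecker_mul_transpose_kronecker [Fintype m] [Fintype p] (A : Matrix l m R)
    (B : Matrix n p R) (C : Matrix m₁ m R) (D : Matrix n₁ p R) :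
    (A ⊗ₖ B) * (C ⊗ₖ D)ᵀ = (A * Cᵀ) ⊗ₖ (B * Dᵀ) := by
  rw [← kroneckerMap_transpose, mul_kronecker_mul]

theorem transpose_fromCols_mul_self_eq_one_iff [Fintype m] [DecidableEq n₁] [DecidableEq n₂]
    {A : Matrix m n₁ R} {B : Matrix m n₂ R} :
    (fromCols A B)ᵀ * fromCols A B = 1 ↔ Aᵀ * A = 1 ∧ Aᵀ * B = 0 ∧ Bᵀ * B = 1 := by
  rw [transpose_fromCols_mul_fromCols, ← fromBlocks_one, fromBlocks_inj]
  refine ⟨fun h => ⟨h.1, h.2.1, h.2.2.2⟩, fun h => ⟨h.1, h.2.1, ?_, h.2.2⟩⟩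
  rw [← transpose_transpose A, ← transpose_mul, h.2.1, transpose_zero]

end CommSemiring

theorem mul_inv_transpose_mul_self_eq_one [CommRing R] [Fintype m] [Fintype n] [DecidableEq n]
    {X : Matrix m n R} {T : Matrix n n R} (hT : T.IsSymm) (hTu : IsUnit T.det)
    (hX : Xᵀ * X = T * T) : (X * T⁻¹)ᵀ * (X * T⁻¹) = 1 := by
  rw [transpose_mul_mul_left, transpose_mul_mul_right X X T⁻¹, hX, transpose_nonsing_inv, hT.eq,
    ← Matrix.mul_assoc, ← Matrix.mul_assoc, nonsing_inv_mul _ hTu, Matrix.one_mul,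
    mul_nonsing_inv _ hTu]

end Matrix

section OrthogonalSplit

variable {R m n₁ n₂ : Type*} [CommSemiring R] [Fintype m] [DecidableEq m] [Fintype n₁]
  [DecidableEq n₁] [Fintype n₂] [DecidableEq n₂]

structure IsOrthogonalSplit (U₁ : Matrix m n₁ R) (U₂ : Matrix m n₂ R) : Prop where
  orthonormal₁ : U₁ᵀ * U₁ = 1
  orthogonal : U₁ᵀ * U₂ = 0
  orthonormal₂ : U₂ᵀ * U₂ = 1
  complete : U₁ * U₁ᵀ + U₂ * U₂ᵀ = 1

theorem isOrthogonalSplit_iff {U₁ : Matrix m n₁ R} {U₂ : Matrix m n₂ R} :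
    IsOrthogonalSplit U₁ U₂ ↔
      (fromCols U₁ U₂)ᵀ * fromCols U₁ U₂ = 1 ∧ fromCols U₁ U₂ * (fromCols U₁ U₂)ᵀ = 1 := by
  rw [transpose_fromCols_mul_self_eq_one_iff, fromCols_mul_transpose_fromCols]
  exact ⟨fun h => ⟨⟨h.1, h.2, h.3⟩, h.4⟩, fun h => ⟨h.1.1, h.1.2.1, h.1.2.2, h.2⟩⟩

theorem IsOrthogonalSplit.orthogonal' {U₁ : Matrix m n₁ R} {U₂ : Matrix m n₂ R}
    (h : IsOrthogonalSplit U₁ U₂) : U₂ᵀ * U₁ = 0 := by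
  rw [← transpose_transpose U₁, ← transpose_mul, h.orthogonal, transpose_zero]

theorem IsOrthogonalSplit.kronecker {n m₁ m₂ : Type*} [Fintype n] [DecidableEq n] [Fintype m₁]
    [DecidableEq m₁] [Fintype m₂] [DecidableEq m₂] {U₁ : Matrix m n₁ R} {U₂ : Matrix m n₂ R}
    {V₁ : Matrix n m₁ R} {V₂ : Matrix n m₂ R} (hU : IsOrthogonalSplit U₁ U₂)
    (hV : IsOrthogonalSplit V₁ V₂) :
    IsOrthogonalSplit (fromCols (U₁ ⊗ₖ V₁) (fromCols (U₁ ⊗ₖ V₂) (U₂ ⊗ₖ V₁))) (U₂ ⊗ₖ V₂) where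
  orthonormal₁ := by
    rw [transpose_fromCols_mul_self_eq_one_iff, transpose_fromCols_mul_self_eq_one_iff]
    simp only [transpose_kronecker_mul_kronecker, Matrix.mul_fromCols, fromCols_eq_zero_iff,
      hU.orthonormal₁, hU.orthogonal, hU.orthonormal₂, hV.orthonormal₁, hV.orthogonal,
      hV.orthonormal₂, one_kronecker_one, kronecker_zero, zero_kronecker, and_self]
  orthogonal := by
    simp only [transpose_kronecker_mul_kronecker, transpose_fromCols, fromRows_mul,
      fromRows_eq_zero_iff, hU.orthogonal, hV.orthogonal, kronecker_zero, zero_kronecker, and_self]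
  orthonormal₂ := by
    rw [transpose_kronecker_mul_kronecker, hU.orthonormal₂, hV.orthonormal₂, one_kronecker_one]
  complete := by
    simp only [fromCols_mul_transpose_fromCols, kronecker_mul_transpose_kronecker]
    rw [← one_kronecker_one, ← hU.complete, ← hV.complete, add_kronecker, kronecker_add,
      kronecker_add]
    abel

end OrthogonalSplit

section Factorization

variable {R m p n₁ n₂ k : Type*} [CommSemiring R] [Fintype n₁] [DecidableEq n₁]
  {A : Matrix m p R} {Uh : Matrix m n₁ R} {σ : n₁ → R} {Vh : Matrix p n₁ R}

theorem mul_eq_of_eq_mul_diagonal_mul_transpose [Fintype p] [DecidableEq p] [Fintype k]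
    [DecidableEq k] {Vc : Matrix p k R} (hV : IsOrthogonalSplit Vh Vc)
    (hA : A = Uh * diagonal σ * Vhᵀ) : A * Vh = Uh * diagonal σ := by
  rw [hA, Matrix.mul_assoc, hV.orthonormal₁, Matrix.mul_one]

theorem mul_eq_zero_of_eq_mul_diagonal_mul_transpose [Fintype p] [DecidableEq p] [Fintype k]
    [DecidableEq k] {Vc : Matrix p k R} (hV : IsOrthogonalSplit Vh Vc)
    (hA : A = Uh * diagonal σ * Vhᵀ) : A * Vc = 0 := by
  rw [hA, Matrix.mul_assoc, hV.orthogonal, Matrix.mul_zero]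

theorem transpose_mul_eq_zero_of_eq_mul_diagonal_mul_transpose [Fintype m] [DecidableEq m]
    [Fintype n₂] [DecidableEq n₂] {Uc : Matrix m n₂ R} (hU : IsOrthogonalSplit Uh Uc)
    (hA : A = Uh * diagonal σ * Vhᵀ) : Aᵀ * Uc = 0 := by
  rw [hA, transpose_mul_mul_left, transpose_mul_mul_left, hU.orthogonal, Matrix.mul_zero,
    Matrix.mul_zero]

end Factorization

section Coupled

variable {R m p r m' p' n k d n' k' : Type*} [CommRing R] [Fintype d] [Fintype r]
  [DecidableEq d] [DecidableEq r]

def coupledMatrix [DecidableEq n] [DecidableEq m] (γ : R) (A : Matrix m p R) (B : Matrix n k R) :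
    Matrix (n × m) ((n × p) ⊕ (k × m)) R :=
  fromCols ((γ • (1 : Matrix n n R)) ⊗ₖ A) (B ⊗ₖ (1 : Matrix m m R))

def coupledUh (Uhd : Matrix n d R) (Ucd : Matrix n n' R) (Uhr : Matrix m r R)
    (Ucr : Matrix m m' R) : Matrix (n × m) ((d × r) ⊕ ((d × m') ⊕ (n' × r))) R :=
  fromCols (Uhd ⊗ₖ Uhr) (fromCols (Uhd ⊗ₖ Ucr) (Ucd ⊗ₖ Uhr))

def coupledSigma [DecidableEq m'] [DecidableEq n'] (γ : R) (σd : d → R) (σr : r → R)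
    (T : Matrix (d × r) (d × r) R) :
    Matrix ((d × r) ⊕ ((d × m') ⊕ (n' × r))) ((d × r) ⊕ ((d × m') ⊕ (n' × r))) R :=
  fromBlocks T 0 0
    (fromBlocks (diagonal σd ⊗ₖ (1 : Matrix m' m' R)) 0 0
      (γ • ((1 : Matrix n' n' R) ⊗ₖ diagonal σr)))

def coupledVh (γ : R) (Uhd : Matrix n d R) (Ucd : Matrix n n' R) (Vhd : Matrix k d R)
    (σd : d → R) (Uhr : Matrix m r R) (Ucr : Matrix m m' R) (Vhr : Matrix p r R) (σr : r → R)
    (T : Matrix (d × r) (d × r) R) :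
    Matrix ((n × p) ⊕ (k × m)) ((d × r) ⊕ ((d × m') ⊕ (n' × r))) R :=
  fromRows
    (fromCols (γ • ((Uhd ⊗ₖ (Vhr * diagonal σr)) * T⁻¹)) (fromCols 0 (Ucd ⊗ₖ Vhr)))
    (fromCols (((Vhd * diagonal σd) ⊗ₖ Uhr) * T⁻¹) (fromCols (Vhd ⊗ₖ Ucr) 0))

def coupledVc (γ : R) (Uhd : Matrix n d R) (Vhd : Matrix k d R) (Vcd : Matrix k k' R)
    (σd : d → R) (Uhr : Matrix m r R) (Ucr : Matrix m m' R) (Vhr : Matrix p r R)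
    (Vcr : Matrix p p' R) (σr : r → R) (T : Matrix (d × r) (d × r) R) :
    Matrix ((n × p) ⊕ (k × m)) ((d × r) ⊕ ((d × p') ⊕ (k' × (r ⊕ m')))) R :=
  fromRows
    (fromCols (((Uhd * diagonal σd) ⊗ₖ Vhr) * T⁻¹) (fromCols (Uhd ⊗ₖ Vcr) 0))
    (fromCols ((-γ) • ((Vhd ⊗ₖ (Uhr * diagonal σr)) * T⁻¹))
      (fromCols 0 (Vcd ⊗ₖ fromCols Uhr Ucr)))

def coupledVhHead (γ : R) (Uhd : Matrix n d R) (Vhd : Matrix k d R) (σd : d → R)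
    (Uhr : Matrix m r R) (Vhr : Matrix p r R) (σr : r → R) :
    Matrix ((n × p) ⊕ (k × m)) (d × r) R :=
  fromRows (γ • (Uhd ⊗ₖ (Vhr * diagonal σr))) ((Vhd * diagonal σd) ⊗ₖ Uhr)

def coupledVcHead (γ : R) (Uhd : Matrix n d R) (Vhd : Matrix k d R) (σd : d → R)
    (Uhr : Matrix m r R) (Vhr : Matrix p r R) (σr : r → R) :
    Matrix ((n × p) ⊕ (k × m)) (d × r) R :=
  fromRows ((Uhd * diagonal σd) ⊗ₖ Vhr) ((-γ) • (Vhd ⊗ₖ (Uhr * diagonal σr)))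

variable {γ : R} {Uhd : Matrix n d R} {Ucd : Matrix n n' R} {Vhd : Matrix k d R}
  {Vcd : Matrix k k' R} {σd : d → R} {Uhr : Matrix m r R} {Ucr : Matrix m m' R}
  {Vhr : Matrix p r R} {Vcr : Matrix p p' R} {σr : r → R} {T : Matrix (d × r) (d × r) R}

theorem coupledVh_eq_fromCols :
    coupledVh γ Uhd Ucd Vhd σd Uhr Ucr Vhr σr T =
      fromCols (coupledVhHead γ Uhd Vhd σd Uhr Vhr σr * T⁻¹)
        (fromCols (fromRows 0 (Vhd ⊗ₖ Ucr)) (fromRows (Ucd ⊗ₖ Vhr) 0)) := by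
  rw [coupledVh, coupledVhHead, fromRows_fromCols_eq_fromCols_fromRows,
    fromRows_fromCols_eq_fromCols_fromRows, fromRows_mul, smul_mul]

theorem coupledVc_eq_fromCols :
    coupledVc γ Uhd Vhd Vcd σd Uhr Ucr Vhr Vcr σr T =
      fromCols (coupledVcHead γ Uhd Vhd σd Uhr Vhr σr * T⁻¹)
        (fromCols (fromRows (Uhd ⊗ₖ Vcr) 0) (fromRows 0 (Vcd ⊗ₖ fromCols Uhr Ucr))) := by
  rw [coupledVc, coupledVcHead, fromRows_fromCols_eq_fromCols_fromRows,
    fromRows_fromCols_eq_fromCols_fromRows, fromRows_mul, smul_mul]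

theorem coupledMatrix_eq_mul_coupledSigma_mul [Fintype n] [DecidableEq n] [Fintype n']
    [DecidableEq n'] [Fintype m] [DecidableEq m] [Fintype m'] [DecidableEq m']
    {A : Matrix m p R} {B : Matrix n k R} (hUd : IsOrthogonalSplit Uhd Ucd)
    (hUr : IsOrthogonalSplit Uhr Ucr) (hA : A = Uhr * diagonal σr * Vhrᵀ)
    (hB : B = Uhd * diagonal σd * Vhdᵀ) (hT : T.IsSymm) (hTu : IsUnit T.det) :
    coupledMatrix γ A B = coupledUh Uhd Ucd Uhr Ucr * coupledSigma (m' := m') (n' := n') γ σd σr T *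
      (coupledVh γ Uhd Ucd Vhd σd Uhr Ucr Vhr σr T)ᵀ := by
  have hUSigma : coupledUh Uhd Ucd Uhr Ucr * coupledSigma (m' := m') (n' := n') γ σd σr T =
      fromCols ((Uhd ⊗ₖ Uhr) * T)
        (fromCols ((Uhd * diagonal σd) ⊗ₖ Ucr) (Ucd ⊗ₖ (γ • (Uhr * diagonal σr)))) := by
    simp only [coupledUh, coupledSigma, fromCols_mul_fromBlocks, Matrix.mul_zero, add_zero,
      zero_add, Matrix.mul_smul, ← mul_kronecker_mul, Matrix.mul_one, kronecker_smul]
  have hTT : T * T⁻¹ᵀ = 1 := by rw [transpose_nonsing_inv, hT.eq, mul_nonsing_inv _ hTu]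
  rw [hUSigma, coupledVh_eq_fromCols, fromCols_mul_transpose_fromCols,
    fromCols_mul_transpose_fromCols, transpose_mul, ← Matrix.mul_assoc, Matrix.mul_assoc _ T, hTT,
    Matrix.mul_one]
  simp only [coupledVhHead, transpose_fromRows, mul_fromCols, fromCols_add, transpose_zero,
    Matrix.mul_zero, add_zero, zero_add, coupledMatrix, fromCols_ext_iff]
  simp only [transpose_smul, Matrix.mul_smul, kronecker_mul_transpose_kronecker, Matrix.smul_mul,
    kronecker_smul, smul_kronecker, transpose_mul, diagonal_transpose, Matrix.mul_assoc]
  rw [← smul_add, ← add_kronecker, hUd.complete, ← kronecker_add, hUr.complete, hA, hB,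
    Matrix.mul_assoc, Matrix.mul_assoc]
  exact ⟨rfl, rfl⟩

theorem coupledMatrix_mul_coupledVc [Fintype n] [DecidableEq n] [Fintype m] [DecidableEq m]
    [Fintype p] [DecidableEq p] [Fintype p'] [DecidableEq p'] [Fintype k] [DecidableEq k]
    [Fintype k'] [DecidableEq k'] {A : Matrix m p R} {B : Matrix n k R}
    (hVd : IsOrthogonalSplit Vhd Vcd) (hVr : IsOrthogonalSplit Vhr Vcr)
    (hA : A = Uhr * diagonal σr * Vhrᵀ) (hB : B = Uhd * diagonal σd * Vhdᵀ) :
    coupledMatrix γ A B * coupledVc γ Uhd Vhd Vcd σd Uhr Ucr Vhr Vcr σr T = 0 := by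
  rw [coupledVc_eq_fromCols, coupledMatrix, coupledVcHead, mul_fromCols, mul_fromCols,
    fromCols_eq_zero_iff, fromCols_eq_zero_iff, ← Matrix.mul_assoc]
  simp only [fromCols_mul_fromRows, ← mul_kronecker_mul, Matrix.mul_smul, Matrix.smul_mul,
    Matrix.one_mul, Matrix.mul_zero, add_zero, mul_eq_of_eq_mul_diagonal_mul_transpose hVr hA,
    mul_eq_of_eq_mul_diagonal_mul_transpose hVd hB,
    mul_eq_zero_of_eq_mul_diagonal_mul_transpose hVr hA,
    mul_eq_zero_of_eq_mul_diagonal_mul_transpose hVd hB, kronecker_zero, zero_kronecker,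
    smul_zero, smul_kronecker, neg_smul, Matrix.mul_neg, add_neg_cancel, Matrix.zero_mul, and_self]

theorem coupledMatrix_transpose_mul_kronecker [Fintype n] [DecidableEq n] [Fintype n']
    [DecidableEq n'] [Fintype m] [DecidableEq m] [Fintype m'] [DecidableEq m']
    {A : Matrix m p R} {B : Matrix n k R} (hUd : IsOrthogonalSplit Uhd Ucd)
    (hUr : IsOrthogonalSplit Uhr Ucr) (hA : A = Uhr * diagonal σr * Vhrᵀ)
    (hB : B = Uhd * diagonal σd * Vhdᵀ) : (coupledMatrix γ A B)ᵀ * (Ucd ⊗ₖ Ucr) = 0 := by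
  rw [coupledMatrix, transpose_fromCols, fromRows_mul, fromRows_eq_zero_iff,
    transpose_kronecker_mul_kronecker, transpose_kronecker_mul_kronecker,
    transpose_mul_eq_zero_of_eq_mul_diagonal_mul_transpose hUr hA,
    transpose_mul_eq_zero_of_eq_mul_diagonal_mul_transpose hUd hB, kronecker_zero, zero_kronecker]
  exact ⟨rfl, rfl⟩

variable [Fintype m] [Fintype p] [Fintype m'] [Fintype p'] [Fintype n] [Fintype k]
  [Fintype n'] [Fintype k'] [DecidableEq m] [DecidableEq p] [DecidableEq m']
  [DecidableEq p'] [DecidableEq n] [DecidableEq k] [DecidableEq n'] [DecidableEq k']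

theorem coupledVhHead_transpose_mul_self (hUd : IsOrthogonalSplit Uhd Ucd)
    (hVd : IsOrthogonalSplit Vhd Vcd) (hUr : IsOrthogonalSplit Uhr Ucr)
    (hVr : IsOrthogonalSplit Vhr Vcr) :
    (coupledVhHead γ Uhd Vhd σd Uhr Vhr σr)ᵀ * coupledVhHead γ Uhd Vhd σd Uhr Vhr σr =
      (diagonal σd * diagonal σd) ⊗ₖ (1 : Matrix r r R) +
        (1 : Matrix d d R) ⊗ₖ (γ ^ 2 • (diagonal σr * diagonal σr)) := by
  rw [coupledVhHead, transpose_fromRows_mul_fromRows, transpose_smul, Matrix.smul_mul,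
    Matrix.mul_smul, smul_smul, transpose_kronecker_mul_kronecker,
    transpose_kronecker_mul_kronecker, transpose_mul_self_mul_of_orthonormal hVr.orthonormal₁,
    transpose_mul_self_mul_of_orthonormal hVd.orthonormal₁, hUd.orthonormal₁, hUr.orthonormal₁,
    diagonal_transpose, diagonal_transpose, add_comm, ← sq γ, ← kronecker_smul]

theorem coupledVcHead_transpose_mul_self (hUd : IsOrthogonalSplit Uhd Ucd)
    (hVd : IsOrthogonalSplit Vhd Vcd) (hUr : IsOrthogonalSplit Uhr Ucr)
    (hVr : IsOrthogonalSplit Vhr Vcr) :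
    (coupledVcHead γ Uhd Vhd σd Uhr Vhr σr)ᵀ * coupledVcHead γ Uhd Vhd σd Uhr Vhr σr =
      (diagonal σd * diagonal σd) ⊗ₖ (1 : Matrix r r R) +
        (1 : Matrix d d R) ⊗ₖ (γ ^ 2 • (diagonal σr * diagonal σr)) := by
  rw [coupledVcHead, transpose_fromRows_mul_fromRows, transpose_smul, Matrix.smul_mul,
    Matrix.mul_smul, smul_smul, transpose_kronecker_mul_kronecker,
    transpose_kronecker_mul_kronecker, transpose_mul_self_mul_of_orthonormal hUr.orthonormal₁,
    transpose_mul_self_mul_of_orthonormal hUd.orthonormal₁, hVd.orthonormal₁, hVr.orthonormal₁,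
    diagonal_transpose, diagonal_transpose, neg_mul_neg, ← sq γ, ← kronecker_smul]

theorem coupledVhHead_transpose_mul_coupledVcHead (hUd : IsOrthogonalSplit Uhd Ucd)
    (hVd : IsOrthogonalSplit Vhd Vcd) (hUr : IsOrthogonalSplit Uhr Ucr)
    (hVr : IsOrthogonalSplit Vhr Vcr) :
    (coupledVhHead γ Uhd Vhd σd Uhr Vhr σr)ᵀ * coupledVcHead γ Uhd Vhd σd Uhr Vhr σr = 0 := by
  simp only [coupledVhHead, coupledVcHead, transpose_fromRows_mul_fromRows, transpose_smul,
    Matrix.smul_mul, Matrix.mul_smul, transpose_kronecker_mul_kronecker, transpose_mul_mul_left,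
    transpose_mul_mul_right, hUd.orthonormal₁, hUr.orthonormal₁, hVr.orthonormal₁,
    hVd.orthonormal₁, Matrix.one_mul, Matrix.mul_one, diagonal_transpose, neg_smul, Matrix.mul_neg,
    add_neg_cancel]

theorem coupledVh_transpose_mul_self (hUd : IsOrthogonalSplit Uhd Ucd)
    (hVd : IsOrthogonalSplit Vhd Vcd) (hUr : IsOrthogonalSplit Uhr Ucr)
    (hVr : IsOrthogonalSplit Vhr Vcr) (hT : T.IsSymm) (hTu : IsUnit T.det)
    (hT2 : T * T = (diagonal σd * diagonal σd) ⊗ₖ (1 : Matrix r r R) +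
      (1 : Matrix d d R) ⊗ₖ (γ ^ 2 • (diagonal σr * diagonal σr))) :
    (coupledVh γ Uhd Ucd Vhd σd Uhr Ucr Vhr σr T)ᵀ * coupledVh γ Uhd Ucd Vhd σd Uhr Ucr Vhr σr T
      = 1 := by
  rw [coupledVh_eq_fromCols, transpose_fromCols_mul_self_eq_one_iff,
    transpose_fromCols_mul_self_eq_one_iff]
  refine ⟨mul_inv_transpose_mul_self_eq_one hT hTu
    ((coupledVhHead_transpose_mul_self hUd hVd hUr hVr).trans hT2.symm), ?_⟩
  simp only [coupledVhHead, transpose_mul_mul_left, mul_fromCols, fromCols_eq_zero_iff,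
    transpose_fromRows_mul_fromRows, transpose_smul, Matrix.smul_mul,
    transpose_kronecker_mul_kronecker, transpose_zero, Matrix.zero_mul, Matrix.mul_zero,
    zero_add, add_zero, hUd.orthogonal, hUd.orthonormal₂, hVd.orthonormal₁, hUr.orthogonal,
    hUr.orthonormal₂, hVr.orthonormal₁, kronecker_zero, zero_kronecker, smul_zero,
    one_kronecker_one, and_self]

theorem coupledVc_transpose_mul_self (hUd : IsOrthogonalSplit Uhd Ucd)
    (hVd : IsOrthogonalSplit Vhd Vcd) (hUr : IsOrthogonalSplit Uhr Ucr)
    (hVr : IsOrthogonalSplit Vhr Vcr) (hT : T.IsSymm) (hTu : IsUnit T.det)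
    (hT2 : T * T = (diagonal σd * diagonal σd) ⊗ₖ (1 : Matrix r r R) +
      (1 : Matrix d d R) ⊗ₖ (γ ^ 2 • (diagonal σr * diagonal σr))) :
    (coupledVc γ Uhd Vhd Vcd σd Uhr Ucr Vhr Vcr σr T)ᵀ *
      coupledVc γ Uhd Vhd Vcd σd Uhr Ucr Vhr Vcr σr T = 1 := by
  rw [coupledVc_eq_fromCols, transpose_fromCols_mul_self_eq_one_iff,
    transpose_fromCols_mul_self_eq_one_iff]
  refine ⟨mul_inv_transpose_mul_self_eq_one hT hTu
    ((coupledVcHead_transpose_mul_self hUd hVd hUr hVr).trans hT2.symm), ?_⟩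
  simp only [coupledVcHead, transpose_mul_mul_left, transpose_mul_mul_right, mul_fromCols,
    fromCols_eq_zero_iff, transpose_fromRows_mul_fromRows, transpose_smul, Matrix.smul_mul,
    transpose_kronecker_mul_kronecker, transpose_zero, Matrix.zero_mul, Matrix.mul_zero,
    zero_add, add_zero, hUd.orthonormal₁, hVd.orthogonal, hVd.orthonormal₂, hVr.orthogonal,
    hVr.orthonormal₂, (isOrthogonalSplit_iff.1 hUr).1, kronecker_zero, zero_kronecker, smul_zero,
    one_kronecker_one, and_self]

theorem coupledVh_transpose_mul_coupledVc (hUd : IsOrthogonalSplit Uhd Ucd)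
    (hVd : IsOrthogonalSplit Vhd Vcd) (hUr : IsOrthogonalSplit Uhr Ucr)
    (hVr : IsOrthogonalSplit Vhr Vcr) :
    (coupledVh γ Uhd Ucd Vhd σd Uhr Ucr Vhr σr T)ᵀ *
      coupledVc γ Uhd Vhd Vcd σd Uhr Ucr Vhr Vcr σr T = 0 := by
  rw [coupledVh_eq_fromCols, coupledVc_eq_fromCols, transpose_fromCols_mul_fromCols_eq_zero_iff]
  refine ⟨?_, ?_⟩
  · rw [transpose_mul_mul_left, transpose_mul_mul_right _ _ T⁻¹,
      coupledVhHead_transpose_mul_coupledVcHead hUd hVd hUr hVr, Matrix.zero_mul, Matrix.mul_zero]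
  simp only [coupledVhHead, coupledVcHead, transpose_fromCols, fromRows_mul, fromRows_eq_zero_iff,
    transpose_mul_mul_left, transpose_mul_mul_right, mul_fromCols, fromCols_eq_zero_iff,
    transpose_fromRows_mul_fromRows, transpose_smul, Matrix.smul_mul, Matrix.mul_smul,
    transpose_kronecker_mul_kronecker, transpose_zero, Matrix.zero_mul, Matrix.mul_zero, add_zero,
    hUd.orthonormal₁, hUd.orthogonal', hVd.orthogonal, hVr.orthonormal₁, hVr.orthogonal,
    hUr.orthogonal, hUr.orthogonal', kronecker_zero, zero_kronecker, smul_zero, and_self]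

end Coupled

theorem stmt0_general
    (γ : ℝ)
    (n m p : ℕ)
    (b₁ b₂ : ℝ)
    (Sr : Matrix (Fin m) (Fin p) ℝ)
    (qr : ℕ) (Uhr : Matrix (Fin m) (Fin qr) ℝ) (σr : Fin qr → ℝ)
    (Vhr : Matrix (Fin p) (Fin qr) ℝ)
    (Ucr : Matrix (Fin m) (Fin (m - qr)) ℝ) (Vcr : Matrix (Fin p) (Fin (p - qr)) ℝ)
    (hUr : (fromCols Uhr Ucr)ᵀ * fromCols Uhr Ucr = 1 ∧
           fromCols Uhr Ucr * (fromCols Uhr Ucr)ᵀ = 1)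
    (hVr : (fromCols Vhr Vcr)ᵀ * fromCols Vhr Vcr = 1 ∧
           fromCols Vhr Vcr * (fromCols Vhr Vcr)ᵀ = 1)
    (hSr : Sr = Uhr * Matrix.diagonal σr * Vhrᵀ)
    (qd : ℕ) (Uhd : Matrix (Fin n) (Fin qd) ℝ) (σd : Fin qd → ℝ)
    (Vhd : Matrix (Fin (n+1)) (Fin qd) ℝ)
    (Ucd : Matrix (Fin n) (Fin (n - qd)) ℝ)
    (Vcd : Matrix (Fin (n+1)) (Fin (n + 1 - qd)) ℝ)
    (hUd : (fromCols Uhd Ucd)ᵀ * fromCols Uhd Ucd = 1 ∧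
           fromCols Uhd Ucd * (fromCols Uhd Ucd)ᵀ = 1)
    (hVd : (fromCols Vhd Vcd)ᵀ * fromCols Vhd Vcd = 1 ∧
           fromCols Vhd Vcd * (fromCols Vhd Vcd)ᵀ = 1)
    (hSdsvd : Sd n b₁ b₂ = Uhd * Matrix.diagonal σd * Vhdᵀ)
    -- `Σ̃` is the positive diagonal matrix with `Σ̃² = Σ̂_d² ⊗ I_{q_r} + I_{q_d} ⊗ γ²Σ̂_r²`
    (Sigt : Matrix (Fin qd × Fin qr) (Fin qd × Fin qr) ℝ)
    (hSigtdiag : ∀ i j, i ≠ j → Sigt i j = 0)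
    (hSigtpos : ∀ i, 0 < Sigt i i)
    (hSigtsq : Sigt * Sigt =
      (Matrix.diagonal σd * Matrix.diagonal σd) ⊗ₖ (1 : Matrix (Fin qr) (Fin qr) ℝ) +
      (1 : Matrix (Fin qd) (Fin qd) ℝ) ⊗ₖ (γ ^ 2 • (Matrix.diagonal σr * Matrix.diagonal σr))) :
    let S : Matrix (Fin n × Fin m) ((Fin n × Fin p) ⊕ (Fin (n+1) × Fin m)) ℝ :=
      fromCols ((γ • (1 : Matrix (Fin n) (Fin n) ℝ)) ⊗ₖ Sr)
        (Sd n b₁ b₂ ⊗ₖ (1 : Matrix (Fin m) (Fin m) ℝ))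
    let Uh : Matrix (Fin n × Fin m)
        ((Fin qd × Fin qr) ⊕ ((Fin qd × Fin (m - qr)) ⊕ (Fin (n - qd) × Fin qr))) ℝ :=
      fromCols (Uhd ⊗ₖ Uhr) (fromCols (Uhd ⊗ₖ Ucr) (Ucd ⊗ₖ Uhr))
    let Uc : Matrix (Fin n × Fin m) (Fin (n - qd) × Fin (m - qr)) ℝ := Ucd ⊗ₖ Ucr
    let Sigh : Matrix
        ((Fin qd × Fin qr) ⊕ ((Fin qd × Fin (m - qr)) ⊕ (Fin (n - qd) × Fin qr)))
        ((Fin qd × Fin qr) ⊕ ((Fin qd × Fin (m - qr)) ⊕ (Fin (n - qd) × Fin qr))) ℝ :=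
      fromBlocks Sigt 0 0
        (fromBlocks (Matrix.diagonal σd ⊗ₖ (1 : Matrix (Fin (m - qr)) (Fin (m - qr)) ℝ)) 0 0
          (γ • ((1 : Matrix (Fin (n - qd)) (Fin (n - qd)) ℝ) ⊗ₖ Matrix.diagonal σr)))
    let Vh : Matrix ((Fin n × Fin p) ⊕ (Fin (n+1) × Fin m))
        ((Fin qd × Fin qr) ⊕ ((Fin qd × Fin (m - qr)) ⊕ (Fin (n - qd) × Fin qr))) ℝ :=
      fromRows
        (fromCols (γ • ((Uhd ⊗ₖ (Vhr * Matrix.diagonal σr)) * Sigt⁻¹))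
          (fromCols 0 (Ucd ⊗ₖ Vhr)))
        (fromCols (((Vhd * Matrix.diagonal σd) ⊗ₖ Uhr) * Sigt⁻¹)
          (fromCols (Vhd ⊗ₖ Ucr) 0))
    let Vc : Matrix ((Fin n × Fin p) ⊕ (Fin (n+1) × Fin m))
        ((Fin qd × Fin qr) ⊕ ((Fin qd × Fin (p - qr)) ⊕
          (Fin (n + 1 - qd) × (Fin qr ⊕ Fin (m - qr))))) ℝ :=
      fromRows
        (fromCols (((Uhd * Matrix.diagonal σd) ⊗ₖ Vhr) * Sigt⁻¹)
          (fromCols (Uhd ⊗ₖ Vcr) 0))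
        (fromCols ((-γ) • ((Vhd ⊗ₖ (Uhr * Matrix.diagonal σr)) * Sigt⁻¹))
          (fromCols 0 (Vcd ⊗ₖ fromCols Uhr Ucr)))
    -- (i) `[Û, Ŭ]` is orthogonal
    ((fromCols Uh Uc)ᵀ * fromCols Uh Uc = 1 ∧
      fromCols Uh Uc * (fromCols Uh Uc)ᵀ = 1) ∧
    -- (ii) orthonormality relations for `V̂`, `V̆`
    (Vhᵀ * Vh = 1 ∧ Vcᵀ * Vc = 1 ∧ Vhᵀ * Vc = 0) ∧
    -- (iii) reconstruction
    S = Uh * Sigh * Vhᵀ ∧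
    -- (iv) nullspaces
    (S * Vc = 0 ∧ Sᵀ * Uc = 0) := by
  intro S Uh Uc Sigh Vh Vc
  have hUd' := isOrthogonalSplit_iff.2 hUd
  have hVd' := isOrthogonalSplit_iff.2 hVd
  have hUr' := isOrthogonalSplit_iff.2 hUr
  have hVr' := isOrthogonalSplit_iff.2 hVr
  have hTdiag : Sigt.IsDiag := hSigtdiag
  have hTu : IsUnit Sigt.det := by
    rw [← hTdiag.diagonal_diag, det_diagonal]
    exact (Finset.prod_pos fun i _ => hSigtpos i).ne'.isUnit
  exact ⟨isOrthogonalSplit_iff.1 (hUd'.kronecker hUr'),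
    ⟨coupledVh_transpose_mul_self hUd' hVd' hUr' hVr' hTdiag.isSymm hTu hSigtsq,
      coupledVc_transpose_mul_self hUd' hVd' hUr' hVr' hTdiag.isSymm hTu hSigtsq,
      coupledVh_transpose_mul_coupledVc hUd' hVd' hUr' hVr'⟩,
    coupledMatrix_eq_mul_coupledSigma_mul hUd' hUr' hSr hSdsvd hTdiag.isSymm hTu,
    coupledMatrix_mul_coupledVc hVd' hVr' hSr hSdsvd,
    coupledMatrix_transpose_mul_kronecker hUd' hUr' hSr hSdsvd⟩

/-- exact SVD of `S = [γ I_n ⊗ S_r, S_d ⊗ I_m]` for every `γ > 0`. -/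
theorem stmt0
    (γ : ℝ) (hγ : 0 < γ)
    (n m p : ℕ) (hn : 1 ≤ n) (hm : 1 ≤ m) (hp : 1 ≤ p)
    (b₁ b₂ : ℝ) (hb₁ : b₁ = 0 ∨ b₁ = 1) (hb₂ : b₂ = 0 ∨ b₂ = 1)
    (Sr : Matrix (Fin m) (Fin p) ℝ)
    (qr : ℕ) (Uhr : Matrix (Fin m) (Fin qr) ℝ) (σr : Fin qr → ℝ)
    (Vhr : Matrix (Fin p) (Fin qr) ℝ)
    (Ucr : Matrix (Fin m) (Fin (m - qr)) ℝ) (Vcr : Matrix (Fin p) (Fin (p - qr)) ℝ)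
    (hσr : ∀ i, 0 < σr i)
    (hUr : (fromCols Uhr Ucr)ᵀ * fromCols Uhr Ucr = 1 ∧
           fromCols Uhr Ucr * (fromCols Uhr Ucr)ᵀ = 1)
    (hVr : (fromCols Vhr Vcr)ᵀ * fromCols Vhr Vcr = 1 ∧
           fromCols Vhr Vcr * (fromCols Vhr Vcr)ᵀ = 1)
    (hSr : Sr = Uhr * Matrix.diagonal σr * Vhrᵀ)
    (qd : ℕ) (Uhd : Matrix (Fin n) (Fin qd) ℝ) (σd : Fin qd → ℝ)
    (Vhd : Matrix (Fin (n+1)) (Fin qd) ℝ)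
    (Ucd : Matrix (Fin n) (Fin (n - qd)) ℝ)
    (Vcd : Matrix (Fin (n+1)) (Fin (n + 1 - qd)) ℝ)
    (hσd : ∀ i, 0 < σd i)
    (hUd : (fromCols Uhd Ucd)ᵀ * fromCols Uhd Ucd = 1 ∧
           fromCols Uhd Ucd * (fromCols Uhd Ucd)ᵀ = 1)
    (hVd : (fromCols Vhd Vcd)ᵀ * fromCols Vhd Vcd = 1 ∧
           fromCols Vhd Vcd * (fromCols Vhd Vcd)ᵀ = 1)
    (hSdsvd : Sd n b₁ b₂ = Uhd * Matrix.diagonal σd * Vhdᵀ)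
    -- `Σ̃` is the positive diagonal matrix with `Σ̃² = Σ̂_d² ⊗ I_{q_r} + I_{q_d} ⊗ γ²Σ̂_r²`
    (Sigt : Matrix (Fin qd × Fin qr) (Fin qd × Fin qr) ℝ)
    (hSigtdiag : ∀ i j, i ≠ j → Sigt i j = 0)
    (hSigtpos : ∀ i, 0 < Sigt i i)
    (hSigtsq : Sigt * Sigt =
      (Matrix.diagonal σd * Matrix.diagonal σd) ⊗ₖ (1 : Matrix (Fin qr) (Fin qr) ℝ) +
      (1 : Matrix (Fin qd) (Fin qd) ℝ) ⊗ₖ (γ ^ 2 • (Matrix.diagonal σr * Matrix.diagonal σr))) :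
    let S : Matrix (Fin n × Fin m) ((Fin n × Fin p) ⊕ (Fin (n+1) × Fin m)) ℝ :=
      fromCols ((γ • (1 : Matrix (Fin n) (Fin n) ℝ)) ⊗ₖ Sr)
        (Sd n b₁ b₂ ⊗ₖ (1 : Matrix (Fin m) (Fin m) ℝ))
    let Uh : Matrix (Fin n × Fin m)
        ((Fin qd × Fin qr) ⊕ ((Fin qd × Fin (m - qr)) ⊕ (Fin (n - qd) × Fin qr))) ℝ :=
      fromCols (Uhd ⊗ₖ Uhr) (fromCols (Uhd ⊗ₖ Ucr) (Ucd ⊗ₖ Uhr))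
    let Uc : Matrix (Fin n × Fin m) (Fin (n - qd) × Fin (m - qr)) ℝ := Ucd ⊗ₖ Ucr
    let Sigh : Matrix
        ((Fin qd × Fin qr) ⊕ ((Fin qd × Fin (m - qr)) ⊕ (Fin (n - qd) × Fin qr)))
        ((Fin qd × Fin qr) ⊕ ((Fin qd × Fin (m - qr)) ⊕ (Fin (n - qd) × Fin qr))) ℝ :=
      fromBlocks Sigt 0 0
        (fromBlocks (Matrix.diagonal σd ⊗ₖ (1 : Matrix (Fin (m - qr)) (Fin (m - qr)) ℝ)) 0 0
          (γ • ((1 : Matrix (Fin (n - qd)) (Fin (n - qd)) ℝ) ⊗ₖ Matrix.diagonal σr)))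
    let Vh : Matrix ((Fin n × Fin p) ⊕ (Fin (n+1) × Fin m))
        ((Fin qd × Fin qr) ⊕ ((Fin qd × Fin (m - qr)) ⊕ (Fin (n - qd) × Fin qr))) ℝ :=
      fromRows
        (fromCols (γ • ((Uhd ⊗ₖ (Vhr * Matrix.diagonal σr)) * Sigt⁻¹))
          (fromCols 0 (Ucd ⊗ₖ Vhr)))
        (fromCols (((Vhd * Matrix.diagonal σd) ⊗ₖ Uhr) * Sigt⁻¹)
          (fromCols (Vhd ⊗ₖ Ucr) 0))
    let Vc : Matrix ((Fin n × Fin p) ⊕ (Fin (n+1) × Fin m))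
        ((Fin qd × Fin qr) ⊕ ((Fin qd × Fin (p - qr)) ⊕
          (Fin (n + 1 - qd) × (Fin qr ⊕ Fin (m - qr))))) ℝ :=
      fromRows
        (fromCols (((Uhd * Matrix.diagonal σd) ⊗ₖ Vhr) * Sigt⁻¹)
          (fromCols (Uhd ⊗ₖ Vcr) 0))
        (fromCols ((-γ) • ((Vhd ⊗ₖ (Uhr * Matrix.diagonal σr)) * Sigt⁻¹))
          (fromCols 0 (Vcd ⊗ₖ fromCols Uhr Ucr)))
    -- (i) `[Û, Ŭ]` is orthogonal
    ((fromCols Uh Uc)ᵀ * fromCols Uh Uc = 1 ∧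
      fromCols Uh Uc * (fromCols Uh Uc)ᵀ = 1) ∧
    -- (ii) orthonormality relations for `V̂`, `V̆`
    (Vhᵀ * Vh = 1 ∧ Vcᵀ * Vc = 1 ∧ Vhᵀ * Vc = 0) ∧
    -- (iii) reconstruction
    S = Uh * Sigh * Vhᵀ ∧
    -- (iv) nullspaces
    (S * Vc = 0 ∧ Sᵀ * Uc = 0) :=
  stmt0_general γ n m p b₁ b₂ Sr qr Uhr σr Vhr Ucr Vcr hUr hVr hSr qd Uhd σd Vhd Ucd Vcd hUd hVd
    hSdsvd Sigt hSigtdiag hSigtpos hSigtsq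
end
end

section
/- Let γ ∈ ℝ, n ≥ 1, m, p ≥ 1, b₁, b₂ ∈ {0,1}. Let S_r be an m × p real matrix with an SVD of rank q_r given by (Û_r, Σ̂_r, V̂_r, Ŭ_r, V̆_r), and let S_d = S_d(n; b₁, b₂) with an SVD of rank q_d given by (Û_d, Σ̂_d, V̂_d, Ŭ_d, V̆_d). Let Σ̃ be the (q_d q_r) × (q_d q_r) positive diagonal matrix with Σ̃² = Σ̂_d² ⊗ I_{q_r} + I_{q_d} ⊗ γ²Σ̂_r², and define Û = [Û_d ⊗ Û_r, Û_d ⊗ Ŭ_r, Ŭ_d ⊗ Û_r], Σ̂ = blockdiag(Σ̃, Σ̂_d ⊗ I_{m−q_r}, γ I_{n−q_d} ⊗ Σ̂_r), and V̂ = [[γ(Û_d ⊗ V̂_rΣ̂_r)Σ̃⁻¹, 0, Ŭ_d ⊗ V̂_r], [(V̂_dΣ̂_d ⊗ Û_r)Σ̃⁻¹, V̂_d ⊗ Ŭ_r, 0]] (top block row with np rows, bottom with (n+1)m rows). Then the reconstruction identity Û Σ̂ V̂ᵀ = [γ I_n ⊗ S_r, S_d ⊗ I_m] holds. -/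
/-!
Multiplying out the blocks, `Σ̃` cancels against `Σ̃⁻¹` (it is diagonal, hence symmetric), and the
mixed-product rule `(A ⊗ B)(C ⊗ D) = AC ⊗ BD` turns the first block column of `Û Σ̂ V̂ᵀ` into
`γ (Û_d Û_dᵀ + Ŭ_d Ŭ_dᵀ) ⊗ S_r` and the second into `S_d ⊗ (Û_r Û_rᵀ + Ŭ_r Ŭ_rᵀ)`. Both sums are
identities because `[Û, Ŭ]` is orthogonal.
-/

open Matrix
open scoped Kronecker Matrix

noncomputable section

namespace Matrix

variable {R : Type*} {a b c e i j k l : Type*}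

theorem mul_transpose_add_mul_transpose_eq_one_of_fromCols [Semiring R] [Fintype i] [Fintype j]
    [DecidableEq a] {A : Matrix a i R} {B : Matrix a j R}
    (h : fromCols A B * (fromCols A B)ᵀ = 1) : A * Aᵀ + B * Bᵀ = 1 := by
  rwa [transpose_fromCols, fromCols_mul_fromRows] at h

theorem IsDiag.isUnit_det_of_pos [Field R] [LinearOrder R] [IsStrictOrderedRing R]
    [Fintype i] [DecidableEq i] {D : Matrix i i R} (hD : D.IsDiag) (hpos : ∀ x, 0 < D x x) :
    IsUnit D.det := by
  rw [← hD.diagonal_diag, det_diagonal]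
  exact (Finset.prod_pos fun x _ => hpos x).ne'.isUnit

theorem IsSymm.mul_transpose_mul_inv [CommRing R] [Fintype i] [DecidableEq i]
    {D : Matrix i i R} (hD : D.IsSymm) (hdet : IsUnit D.det) (C : Matrix a i R) :
    D * (C * D⁻¹)ᵀ = Cᵀ := by
  rw [transpose_mul, hD.inv.eq, mul_nonsing_inv_cancel_left _ _ hdet]

theorem kronecker_mul_mul_transpose_kronecker_mul_inv [CommRing R]
    [Fintype i] [Fintype j] [DecidableEq i] [DecidableEq j]
    {D : Matrix (i × j) (i × j) R} (hD : D.IsSymm) (hdet : IsUnit D.det)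
    (A : Matrix a i R) (B : Matrix b j R) (C : Matrix c i R) (E : Matrix e j R) :
    (A ⊗ₖ B) * D * ((C ⊗ₖ E) * D⁻¹)ᵀ = (A * Cᵀ) ⊗ₖ (B * Eᵀ) := by
  rw [Matrix.mul_assoc, hD.mul_transpose_mul_inv hdet, ← kroneckerMap_transpose,
    ← mul_kronecker_mul]

theorem kronecker_mul_kronecker_mul_transpose_kronecker [CommSemiring R]
    [Fintype i] [Fintype j] [Fintype k] [Fintype l]
    (A : Matrix a i R) (B : Matrix b j R) (C : Matrix i k R) (E : Matrix j l R)
    (F : Matrix c k R) (G : Matrix e l R) :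
    (A ⊗ₖ B) * (C ⊗ₖ E) * (F ⊗ₖ G)ᵀ = (A * C * Fᵀ) ⊗ₖ (B * E * Gᵀ) := by
  rw [← kroneckerMap_transpose, ← mul_kronecker_mul, ← mul_kronecker_mul]

end Matrix

theorem stmt1_general
    (γ : ℝ)
    (n m p : ℕ)
    (b₁ b₂ : ℝ)
    (Sr : Matrix (Fin m) (Fin p) ℝ)
    (qr : ℕ) (Uhr : Matrix (Fin m) (Fin qr) ℝ) (σr : Fin qr → ℝ)
    (Vhr : Matrix (Fin p) (Fin qr) ℝ)
    (Ucr : Matrix (Fin m) (Fin (m - qr)) ℝ)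
    (hUr : (fromCols Uhr Ucr)ᵀ * fromCols Uhr Ucr = 1 ∧
           fromCols Uhr Ucr * (fromCols Uhr Ucr)ᵀ = 1)
    (hSr : Sr = Uhr * Matrix.diagonal σr * Vhrᵀ)
    (qd : ℕ) (Uhd : Matrix (Fin n) (Fin qd) ℝ) (σd : Fin qd → ℝ)
    (Vhd : Matrix (Fin (n+1)) (Fin qd) ℝ)
    (Ucd : Matrix (Fin n) (Fin (n - qd)) ℝ)
    (hUd : (fromCols Uhd Ucd)ᵀ * fromCols Uhd Ucd = 1 ∧
           fromCols Uhd Ucd * (fromCols Uhd Ucd)ᵀ = 1)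
    (hSdsvd : Sd n b₁ b₂ = Uhd * Matrix.diagonal σd * Vhdᵀ)
    -- `Σ̃` is the positive diagonal matrix with `Σ̃² = Σ̂_d² ⊗ I_{q_r} + I_{q_d} ⊗ γ²Σ̂_r²`
    (Sigt : Matrix (Fin qd × Fin qr) (Fin qd × Fin qr) ℝ)
    (hSigtdiag : ∀ i j, i ≠ j → Sigt i j = 0)
    (hSigtpos : ∀ i, 0 < Sigt i i) :
    let S : Matrix (Fin n × Fin m) ((Fin n × Fin p) ⊕ (Fin (n+1) × Fin m)) ℝ :=
      fromCols ((γ • (1 : Matrix (Fin n) (Fin n) ℝ)) ⊗ₖ Sr)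
        (Sd n b₁ b₂ ⊗ₖ (1 : Matrix (Fin m) (Fin m) ℝ))
    let Uh : Matrix (Fin n × Fin m)
        ((Fin qd × Fin qr) ⊕ ((Fin qd × Fin (m - qr)) ⊕ (Fin (n - qd) × Fin qr))) ℝ :=
      fromCols (Uhd ⊗ₖ Uhr) (fromCols (Uhd ⊗ₖ Ucr) (Ucd ⊗ₖ Uhr))
    let Sigh : Matrix
        ((Fin qd × Fin qr) ⊕ ((Fin qd × Fin (m - qr)) ⊕ (Fin (n - qd) × Fin qr)))
        ((Fin qd × Fin qr) ⊕ ((Fin qd × Fin (m - qr)) ⊕ (Fin (n - qd) × Fin qr))) ℝ :=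
      fromBlocks Sigt 0 0
        (fromBlocks (Matrix.diagonal σd ⊗ₖ (1 : Matrix (Fin (m - qr)) (Fin (m - qr)) ℝ)) 0 0
          (γ • ((1 : Matrix (Fin (n - qd)) (Fin (n - qd)) ℝ) ⊗ₖ Matrix.diagonal σr)))
    let Vh : Matrix ((Fin n × Fin p) ⊕ (Fin (n+1) × Fin m))
        ((Fin qd × Fin qr) ⊕ ((Fin qd × Fin (m - qr)) ⊕ (Fin (n - qd) × Fin qr))) ℝ :=
      fromRows
        (fromCols (γ • ((Uhd ⊗ₖ (Vhr * Matrix.diagonal σr)) * Sigt⁻¹))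
          (fromCols 0 (Ucd ⊗ₖ Vhr)))
        (fromCols (((Vhd * Matrix.diagonal σd) ⊗ₖ Uhr) * Sigt⁻¹)
          (fromCols (Vhd ⊗ₖ Ucr) 0))
    Uh * Sigh * Vhᵀ = S := by
  intro S Uh Sigh Vh
  have hUr' := mul_transpose_add_mul_transpose_eq_one_of_fromCols hUr.2
  have hUd' := mul_transpose_add_mul_transpose_eq_one_of_fromCols hUd.2
  have hSigt : Sigt.IsDiag := hSigtdiag
  have hSigtSymm := hSigt.isSymm
  have hdet := hSigt.isUnit_det_of_pos hSigtpos
  simp only [S, Uh, Sigh, Vh, transpose_fromRows, transpose_fromCols, fromCols_mul_fromBlocks,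
    mul_fromCols, fromCols_mul_fromRows, Matrix.mul_zero, add_zero, zero_add, transpose_zero,
    fromCols_ext_iff]
  constructor
  · rw [transpose_smul, Matrix.mul_smul,
      kronecker_mul_mul_transpose_kronecker_mul_inv hSigtSymm hdet, Matrix.mul_smul, Matrix.smul_mul, kronecker_mul_kronecker_mul_transpose_kronecker,
      transpose_mul, diagonal_transpose, Matrix.mul_one, ← Matrix.mul_assoc, ← hSr, ← smul_add,
      ← add_kronecker, hUd', smul_kronecker]
  · rw [kronecker_mul_mul_transpose_kronecker_mul_inv hSigtSymm hdet,
      kronecker_mul_kronecker_mul_transpose_kronecker, transpose_mul, diagonal_transpose,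
      Matrix.mul_one, ← Matrix.mul_assoc, ← hSdsvd, ← kronecker_add, hUr']

/-- the reconstruction identity `Û Σ̂ V̂ᵀ = [γ I_n ⊗ S_r, S_d ⊗ I_m]`
for every `γ ∈ ℝ`. -/
theorem stmt1
    (γ : ℝ)
    (n m p : ℕ) (hn : 1 ≤ n) (hm : 1 ≤ m) (hp : 1 ≤ p)
    (b₁ b₂ : ℝ) (hb₁ : b₁ = 0 ∨ b₁ = 1) (hb₂ : b₂ = 0 ∨ b₂ = 1)
    (Sr : Matrix (Fin m) (Fin p) ℝ)
    (qr : ℕ) (Uhr : Matrix (Fin m) (Fin qr) ℝ) (σr : Fin qr → ℝ)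
    (Vhr : Matrix (Fin p) (Fin qr) ℝ)
    (Ucr : Matrix (Fin m) (Fin (m - qr)) ℝ) (Vcr : Matrix (Fin p) (Fin (p - qr)) ℝ)
    (hσr : ∀ i, 0 < σr i)
    (hUr : (fromCols Uhr Ucr)ᵀ * fromCols Uhr Ucr = 1 ∧
           fromCols Uhr Ucr * (fromCols Uhr Ucr)ᵀ = 1)
    (hVr : (fromCols Vhr Vcr)ᵀ * fromCols Vhr Vcr = 1 ∧
           fromCols Vhr Vcr * (fromCols Vhr Vcr)ᵀ = 1)
    (hSr : Sr = Uhr * Matrix.diagonal σr * Vhrᵀ)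
    (qd : ℕ) (Uhd : Matrix (Fin n) (Fin qd) ℝ) (σd : Fin qd → ℝ)
    (Vhd : Matrix (Fin (n+1)) (Fin qd) ℝ)
    (Ucd : Matrix (Fin n) (Fin (n - qd)) ℝ)
    (Vcd : Matrix (Fin (n+1)) (Fin (n + 1 - qd)) ℝ)
    (hσd : ∀ i, 0 < σd i)
    (hUd : (fromCols Uhd Ucd)ᵀ * fromCols Uhd Ucd = 1 ∧
           fromCols Uhd Ucd * (fromCols Uhd Ucd)ᵀ = 1)
    (hVd : (fromCols Vhd Vcd)ᵀ * fromCols Vhd Vcd = 1 ∧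
           fromCols Vhd Vcd * (fromCols Vhd Vcd)ᵀ = 1)
    (hSdsvd : Sd n b₁ b₂ = Uhd * Matrix.diagonal σd * Vhdᵀ)
    -- `Σ̃` is the positive diagonal matrix with `Σ̃² = Σ̂_d² ⊗ I_{q_r} + I_{q_d} ⊗ γ²Σ̂_r²`
    (Sigt : Matrix (Fin qd × Fin qr) (Fin qd × Fin qr) ℝ)
    (hSigtdiag : ∀ i j, i ≠ j → Sigt i j = 0)
    (hSigtpos : ∀ i, 0 < Sigt i i)
    (hSigtsq : Sigt * Sigt =
      (Matrix.diagonal σd * Matrix.diagonal σd) ⊗ₖ (1 : Matrix (Fin qr) (Fin qr) ℝ) +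
      (1 : Matrix (Fin qd) (Fin qd) ℝ) ⊗ₖ (γ ^ 2 • (Matrix.diagonal σr * Matrix.diagonal σr))) :
    let S : Matrix (Fin n × Fin m) ((Fin n × Fin p) ⊕ (Fin (n+1) × Fin m)) ℝ :=
      fromCols ((γ • (1 : Matrix (Fin n) (Fin n) ℝ)) ⊗ₖ Sr)
        (Sd n b₁ b₂ ⊗ₖ (1 : Matrix (Fin m) (Fin m) ℝ))
    let Uh : Matrix (Fin n × Fin m)
        ((Fin qd × Fin qr) ⊕ ((Fin qd × Fin (m - qr)) ⊕ (Fin (n - qd) × Fin qr))) ℝ :=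
      fromCols (Uhd ⊗ₖ Uhr) (fromCols (Uhd ⊗ₖ Ucr) (Ucd ⊗ₖ Uhr))
    let Sigh : Matrix
        ((Fin qd × Fin qr) ⊕ ((Fin qd × Fin (m - qr)) ⊕ (Fin (n - qd) × Fin qr)))
        ((Fin qd × Fin qr) ⊕ ((Fin qd × Fin (m - qr)) ⊕ (Fin (n - qd) × Fin qr))) ℝ :=
      fromBlocks Sigt 0 0
        (fromBlocks (Matrix.diagonal σd ⊗ₖ (1 : Matrix (Fin (m - qr)) (Fin (m - qr)) ℝ)) 0 0
          (γ • ((1 : Matrix (Fin (n - qd)) (Fin (n - qd)) ℝ) ⊗ₖ Matrix.diagonal σr)))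
    let Vh : Matrix ((Fin n × Fin p) ⊕ (Fin (n+1) × Fin m))
        ((Fin qd × Fin qr) ⊕ ((Fin qd × Fin (m - qr)) ⊕ (Fin (n - qd) × Fin qr))) ℝ :=
      fromRows
        (fromCols (γ • ((Uhd ⊗ₖ (Vhr * Matrix.diagonal σr)) * Sigt⁻¹))
          (fromCols 0 (Ucd ⊗ₖ Vhr)))
        (fromCols (((Vhd * Matrix.diagonal σd) ⊗ₖ Uhr) * Sigt⁻¹)
          (fromCols (Vhd ⊗ₖ Ucr) 0))
    Uh * Sigh * Vhᵀ = S :=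
  stmt1_general γ n m p b₁ b₂ Sr qr Uhr σr Vhr Ucr hUr hSr qd Uhd σd Vhd Ucd hUd hSdsvd Sigt
    hSigtdiag hSigtpos
end
end

section
/- Let n₁, n₂ ≥ 1, n = n₁ + n₂, b₁, b₂ ∈ {0,1}, m ≥ 1, M₊ ⊆ {1,…,m}, and T = S_d S_dᵀ ⊗ D₊ + (S_d S_dᵀ − H Hᵀ) ⊗ D₋ with S_d = S_d(n; b₁, b₂). Let u ∈ ℝⁿ be a unit vector and σ ≥ 0 with S_d S_dᵀ u = σ² u. Then P = u uᵀ ⊗ D₊ satisfies Pᵀ = P, P² = P, T P = P T = σ² P, and trace(P) = |M₊|. In particular P is an orthogonal projection onto a σ²-eigenspace of T of dimension |M₊|. -/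
open Matrix
open scoped Kronecker Matrix

noncomputable section

namespace Matrix

variable {α m n : Type*} [Fintype m] [Fintype n]

theorem diagonal_mul_diagonal_eq_zero [DecidableEq m] [NonUnitalNonAssocSemiring α]
    {d₁ d₂ : m → α} (h : ∀ i, d₁ i * d₂ i = 0) : diagonal d₁ * diagonal d₂ = 0 := by
  rw [diagonal_mul_diagonal, funext h, diagonal_zero]

theorem isIdempotentElem_diagonal_ite [DecidableEq m] [NonAssocSemiring α] (p : m → Prop)
    [DecidablePred p] :
    IsIdempotentElem (diagonal fun i => if p i then (1 : α) else 0) := by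
  rw [IsIdempotentElem, diagonal_mul_diagonal]
  congr 1
  ext i
  split_ifs <;> simp

theorem isIdempotentElem_vecMulVec_self [CommSemiring α] {u : n → α} (hu : u ⬝ᵥ u = 1) :
    IsIdempotentElem (vecMulVec u u) := by
  rw [IsIdempotentElem, vecMulVec_mul_vecMulVec, hu, one_smul]

section Kronecker

variable [CommSemiring α] {A B Q : Matrix n n α} {E F : Matrix m m α}

theorem kronecker_add_kronecker_mul_kronecker (hE : IsIdempotentElem E) (hFE : F * E = 0) :
    (A ⊗ₖ E + B ⊗ₖ F) * (Q ⊗ₖ E) = (A * Q) ⊗ₖ E := by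
  rw [add_mul, ← mul_kronecker_mul, ← mul_kronecker_mul, hE.eq, hFE, kronecker_zero, add_zero]

theorem kronecker_mul_kronecker_add_kronecker (hE : IsIdempotentElem E) (hEF : E * F = 0) :
    (Q ⊗ₖ E) * (A ⊗ₖ E + B ⊗ₖ F) = (Q * A) ⊗ₖ E := by
  rw [mul_add, ← mul_kronecker_mul, ← mul_kronecker_mul, hE.eq, hEF, kronecker_zero, add_zero]

end Kronecker

end Matrix

theorem stmt6_general (n₁ n₂ m : ℕ) (b₁ b₂ : ℝ) (Mp : Finset (Fin m))
    (u : Fin (n₁ + n₂) → ℝ) (hu : ∑ i, u i ^ 2 = 1)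
    (σ : ℝ)
    (heig : (Sd (n₁ + n₂) b₁ b₂ * (Sd (n₁ + n₂) b₁ b₂)ᵀ) *ᵥ u = σ ^ 2 • u) :
    let Dp : Matrix (Fin m) (Fin m) ℝ := Matrix.diagonal fun i => if i ∈ Mp then 1 else 0
    let Dm : Matrix (Fin m) (Fin m) ℝ := Matrix.diagonal fun i => if i ∈ Mp then 0 else 1
    let H : Matrix (Fin (n₁ + n₂)) (Fin (n₁ + n₂ + 1)) ℝ :=
      Matrix.of fun i j =>
        if (i : ℕ) = n₁ - 1 ∧ (j : ℕ) = n₁ then -1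
        else if (i : ℕ) = n₁ ∧ (j : ℕ) = n₁ then 1
        else 0
    let T : Matrix (Fin (n₁ + n₂) × Fin m) (Fin (n₁ + n₂) × Fin m) ℝ :=
      (Sd (n₁ + n₂) b₁ b₂ * (Sd (n₁ + n₂) b₁ b₂)ᵀ) ⊗ₖ Dp +
      (Sd (n₁ + n₂) b₁ b₂ * (Sd (n₁ + n₂) b₁ b₂)ᵀ - H * Hᵀ) ⊗ₖ Dm
    let P : Matrix (Fin (n₁ + n₂) × Fin m) (Fin (n₁ + n₂) × Fin m) ℝ :=
      vecMulVec u u ⊗ₖ Dp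
    Pᵀ = P ∧ P * P = P ∧ T * P = σ ^ 2 • P ∧ P * T = σ ^ 2 • P ∧
      P.trace = (Mp.card : ℝ) := by
  intro Dp Dm H T P
  set A := Sd (n₁ + n₂) b₁ b₂ * (Sd (n₁ + n₂) b₁ b₂)ᵀ
  have hA : Aᵀ = A := by rw [transpose_mul, transpose_transpose]
  have hunit : u ⬝ᵥ u = 1 := by simpa [dotProduct, sq] using hu
  have hDp : IsIdempotentElem Dp := isIdempotentElem_diagonal_ite (· ∈ Mp)
  have hDmDp : Dm * Dp = 0 := diagonal_mul_diagonal_eq_zero fun i => by split_ifs <;> simp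
  have hDpDm : Dp * Dm = 0 := diagonal_mul_diagonal_eq_zero fun i => by split_ifs <;> simp
  have hAu : A * vecMulVec u u = σ ^ 2 • vecMulVec u u := by
    rw [mul_vecMulVec, heig, smul_vecMulVec]
  have huA : vecMulVec u u * A = σ ^ 2 • vecMulVec u u := by
    rw [vecMulVec_mul, ← hA, vecMul_transpose, heig, vecMulVec_smul]
  refine ⟨?_, ?_, ?_, ?_, ?_⟩
  · rw [← kroneckerMap_transpose, transpose_vecMulVec, diagonal_transpose]
  · rw [← mul_kronecker_mul, (isIdempotentElem_vecMulVec_self hunit).eq, hDp.eq]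
  · rw [kronecker_add_kronecker_mul_kronecker hDp hDmDp, hAu, smul_kronecker]
  · rw [kronecker_mul_kronecker_add_kronecker hDp hDpDm, huA, smul_kronecker]
  · simp [P, Dp, trace_kronecker, hunit, trace_diagonal]

/-- `P = uuᵀ ⊗ D₊` is an orthogonal eigenprojection of `T` of rank `|M₊|`. -/
theorem stmt6 (n₁ n₂ m : ℕ) (h₁ : 1 ≤ n₁) (h₂ : 1 ≤ n₂) (hm : 1 ≤ m)
    (b₁ b₂ : ℝ) (hb₁ : b₁ = 0 ∨ b₁ = 1) (hb₂ : b₂ = 0 ∨ b₂ = 1)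
    (Mp : Finset (Fin m))
    (u : Fin (n₁ + n₂) → ℝ) (hu : ∑ i, u i ^ 2 = 1)
    (σ : ℝ) (hσ : 0 ≤ σ)
    (heig : (Sd (n₁ + n₂) b₁ b₂ * (Sd (n₁ + n₂) b₁ b₂)ᵀ) *ᵥ u = σ ^ 2 • u) :
    let Dp : Matrix (Fin m) (Fin m) ℝ := Matrix.diagonal fun i => if i ∈ Mp then 1 else 0
    let Dm : Matrix (Fin m) (Fin m) ℝ := Matrix.diagonal fun i => if i ∈ Mp then 0 else 1
    let H : Matrix (Fin (n₁ + n₂)) (Fin (n₁ + n₂ + 1)) ℝ :=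
      Matrix.of fun i j =>
        if (i : ℕ) = n₁ - 1 ∧ (j : ℕ) = n₁ then -1
        else if (i : ℕ) = n₁ ∧ (j : ℕ) = n₁ then 1
        else 0
    let T : Matrix (Fin (n₁ + n₂) × Fin m) (Fin (n₁ + n₂) × Fin m) ℝ :=
      (Sd (n₁ + n₂) b₁ b₂ * (Sd (n₁ + n₂) b₁ b₂)ᵀ) ⊗ₖ Dp +
      (Sd (n₁ + n₂) b₁ b₂ * (Sd (n₁ + n₂) b₁ b₂)ᵀ - H * Hᵀ) ⊗ₖ Dm
    let P : Matrix (Fin (n₁ + n₂) × Fin m) (Fin (n₁ + n₂) × Fin m) ℝ :=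
      vecMulVec u u ⊗ₖ Dp
    Pᵀ = P ∧ P * P = P ∧ T * P = σ ^ 2 • P ∧ P * T = σ ^ 2 • P ∧
      P.trace = (Mp.card : ℝ) :=
  stmt6_general n₁ n₂ m b₁ b₂ Mp u hu σ heig
end
end

section
/- Let n₁, n₂ ≥ 1, n = n₁ + n₂, b₁, b₂ ∈ {0,1}, m ≥ 1, M₊ ⊆ {1,…,m}, and T = S_d S_dᵀ ⊗ D₊ + (S_d S_dᵀ − H Hᵀ) ⊗ D₋ with S_d = S_d(n; b₁, b₂), S_{d₁} = S_d(n₁; b₁, 0), S_{d₂} = S_d(n₂; 0, b₂). Let u₁ ∈ ℝ^{n₁} and u₂ ∈ ℝ^{n₂} be unit vectors, α ∈ {1, −1}, C₁, C₂ ≥ 0 with C₁² + C₂² = 1, and set u = [C₁ u₁; α C₂ u₂] ∈ ℝⁿ. Suppose σ ≥ 0 satisfies S_d S_dᵀ u = σ² u, S_{d₁} S_{d₁}ᵀ u₁ = σ² u₁, and S_{d₂} S_{d₂}ᵀ u₂ = σ² u₂. Then P = u uᵀ ⊗ D₊ + blockdiag(u₁u₁ᵀ, 0_{n₂×n₂})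 ⊗ D₋ + blockdiag(0_{n₁×n₁}, u₂u₂ᵀ) ⊗ D₋ satisfies Pᵀ = P, P² = P, and T P = P T = σ² P; i.e., P is an orthogonal projection onto a σ²-eigenspace of T. -/
/-!
Column `n₁` of `S_d(n₁ + n₂; b₁, b₂)` coincides with the only nonzero column of `H`, and deleting
it splits `S_d` into `S_d(n₁; b₁, 0)` and `S_d(n₂; 0, b₂)`; hence
`S_d S_dᵀ - H Hᵀ = blockdiag(S_{d₁} S_{d₁}ᵀ, S_{d₂} S_{d₂}ᵀ)`.
For a unit eigenvector `v` of a symmetric `M`, `v vᵀ` is a symmetric idempotent that `M` scales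
by the eigenvalue from either side; so `u uᵀ` is a `σ²`-eigenprojection of `S_d S_dᵀ` and
`blockdiag(u₁u₁ᵀ, u₂u₂ᵀ)` one of `S_d S_dᵀ - H Hᵀ`. As `D₊` and `D₋` are complementary orthogonal
idempotents, the two Kronecker summands of `T` and of `P` never interact.
-/

open Matrix
open scoped Kronecker Matrix

noncomputable section

namespace Matrix

variable {ι κ R : Type*} [CommSemiring R]

structure IsEigenprojection [Fintype ι] (M Q : Matrix ι ι R) (c : R) : Prop where
  transpose_eq : Qᵀ = Q
  mul_self : Q * Q = Q
  mul_left : M * Q = c • Q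
  mul_right : Q * M = c • Q

namespace IsEigenprojection

variable [Fintype ι] [Fintype κ] {M Q : Matrix ι ι R} {c : R}

theorem vecMulVec_self {v : ι → R} (hM : M.IsSymm) (hv : v ⬝ᵥ v = 1) (hMv : M *ᵥ v = c • v) :
    IsEigenprojection M (vecMulVec v v) c where
  transpose_eq := transpose_vecMulVec v v
  mul_self := by rw [vecMulVec_mul_vecMulVec, hv, one_smul]
  mul_left := by rw [mul_vecMulVec, hMv, smul_vecMulVec]
  mul_right := by rw [vecMulVec_mul, ← hM.eq, vecMul_transpose, hMv, vecMulVec_smul]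

theorem fromBlocks {M' Q' : Matrix κ κ R} (h : IsEigenprojection M Q c)
    (h' : IsEigenprojection M' Q' c) :
    IsEigenprojection (fromBlocks M 0 0 M') (fromBlocks Q 0 0 Q') c where
  transpose_eq := by simp [fromBlocks_transpose, h.transpose_eq, h'.transpose_eq]
  mul_self := by simp [fromBlocks_multiply, h.mul_self, h'.mul_self]
  mul_left := by simp [fromBlocks_multiply, fromBlocks_smul, h.mul_left, h'.mul_left]
  mul_right := by simp [fromBlocks_multiply, fromBlocks_smul, h.mul_right, h'.mul_right]

theorem submatrix_equiv (h : IsEigenprojection M Q c) (e : κ ≃ ι) :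
    IsEigenprojection (M.submatrix e e) (Q.submatrix e e) c where
  transpose_eq := by rw [transpose_submatrix, h.transpose_eq]
  mul_self := by rw [submatrix_mul_equiv, h.mul_self]
  mul_left := by rw [submatrix_mul_equiv, h.mul_left]; rfl
  mul_right := by rw [submatrix_mul_equiv, h.mul_right]; rfl

end IsEigenprojection

section Kronecker

variable [Fintype ι] [Fintype κ] {Dp Dm : Matrix κ κ R}

theorem kronecker_add_kronecker_mul (hp : Dp * Dp = Dp) (hm : Dm * Dm = Dm)
    (hpm : Dp * Dm = 0) (hmp : Dm * Dp = 0) (X Y X' Y' : Matrix ι ι R) :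
    (X ⊗ₖ Dp + Y ⊗ₖ Dm) * (X' ⊗ₖ Dp + Y' ⊗ₖ Dm) = (X * X') ⊗ₖ Dp + (Y * Y') ⊗ₖ Dm := by
  simp only [add_mul, mul_add, ← mul_kronecker_mul, hp, hm, hpm, hmp, kronecker_zero, add_zero,
    zero_add]

theorem IsEigenprojection.kronecker_add {A B Qp Qm : Matrix ι ι R} {c : R}
    (hA : IsEigenprojection A Qp c) (hB : IsEigenprojection B Qm c)
    (hp : Dp * Dp = Dp) (hm : Dm * Dm = Dm) (hpm : Dp * Dm = 0) (hmp : Dm * Dp = 0)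
    (hpT : Dpᵀ = Dp) (hmT : Dmᵀ = Dm) :
    IsEigenprojection (A ⊗ₖ Dp + B ⊗ₖ Dm) (Qp ⊗ₖ Dp + Qm ⊗ₖ Dm) c where
  transpose_eq := by
    rw [transpose_add, ← kroneckerMap_transpose, ← kroneckerMap_transpose, hA.transpose_eq,
      hB.transpose_eq, hpT, hmT]
  mul_self := by rw [kronecker_add_kronecker_mul hp hm hpm hmp, hA.mul_self, hB.mul_self]
  mul_left := by
    rw [kronecker_add_kronecker_mul hp hm hpm hmp, hA.mul_left, hB.mul_left, smul_kronecker,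
      smul_kronecker, smul_add]
  mul_right := by
    rw [kronecker_add_kronecker_mul hp hm hpm hmp, hA.mul_right, hB.mul_right, smul_kronecker,
      smul_kronecker, smul_add]

end Kronecker

theorem diagonal_ite_mul_diagonal_ite [Fintype ι] [DecidableEq ι] (p : ι → Prop)
    [DecidablePred p] (a b a' b' : R) :
    diagonal (fun i => if p i then a else b) * diagonal (fun i => if p i then a' else b') =
      diagonal fun i => if p i then a * a' else b * b' := by
  rw [diagonal_mul_diagonal]
  congr 1 with i
  split_ifs <;> rfl

theorem IsEigenprojection.kronecker_add_kronecker_indicator [Fintype ι] [Fintype κ]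
    [DecidableEq κ] {A B Qp Qm : Matrix ι ι R} {c : R} (hA : IsEigenprojection A Qp c)
    (hB : IsEigenprojection B Qm c) (p : κ → Prop) [DecidablePred p] :
    IsEigenprojection
      (A ⊗ₖ diagonal (fun i => if p i then 1 else 0) +
        B ⊗ₖ diagonal (fun i => if p i then 0 else 1))
      (Qp ⊗ₖ diagonal (fun i => if p i then 1 else 0) +
        Qm ⊗ₖ diagonal (fun i => if p i then 0 else 1)) c := by
  refine hA.kronecker_add hB ?_ ?_ ?_ ?_ (diagonal_transpose _) (diagonal_transpose _) <;>
    simp only [diagonal_ite_mul_diagonal_ite, mul_one, mul_zero, ite_self, diagonal_zero]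

theorem isSymm_mul_transpose_self' [Fintype κ] (A : Matrix ι κ R) : (A * Aᵀ).IsSymm := by
  rw [IsSymm, transpose_mul, transpose_transpose]

end Matrix

def sdDiag (b₁ : ℝ) (i : ℕ) : ℝ := if i = 0 then b₁ else 1

def sdSuperdiag (n : ℕ) (b₂ : ℝ) (i : ℕ) : ℝ := if i = n - 1 then -b₂ else -1

def sdGram (n : ℕ) (b₁ b₂ : ℝ) (i j : ℕ) : ℝ :=
  (if i = j then sdDiag b₁ i * sdDiag b₁ j + sdSuperdiag n b₂ i * sdSuperdiag n b₂ j else 0) +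
    (if i = j + 1 then sdDiag b₁ i * sdSuperdiag n b₂ j else 0) +
    (if i + 1 = j then sdSuperdiag n b₂ i * sdDiag b₁ j else 0)

theorem Sd_apply_eq (n : ℕ) (b₁ b₂ : ℝ) (i : Fin n) (k : Fin (n + 1)) :
    Sd n b₁ b₂ i k = (if k = i.castSucc then sdDiag b₁ i else 0) +
      (if k = i.succ then sdSuperdiag n b₂ i else 0) := by
  simp only [Sd, of_apply, sdDiag, sdSuperdiag, Fin.ext_iff, Fin.val_castSucc, Fin.val_succ]
  grind

theorem Sd_mul_transpose_apply (n : ℕ) (b₁ b₂ : ℝ) (i j : Fin n) :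
    (Sd n b₁ b₂ * (Sd n b₁ b₂)ᵀ) i j = sdGram n b₁ b₂ i j := by
  simp only [mul_apply, transpose_apply, Sd_apply_eq, add_mul, mul_add, ite_mul, mul_ite,
    zero_mul, mul_zero, Finset.sum_add_distrib, Finset.sum_ite_eq', Finset.mem_univ, if_true]
  simp only [Fin.ext_iff, Fin.val_castSucc, Fin.val_succ, sdGram]
  grind

def interfaceCut (n₁ n₂ : ℕ) : Matrix (Fin (n₁ + n₂)) (Fin (n₁ + n₂ + 1)) ℝ :=
  Matrix.of fun i j =>
    if (i : ℕ) = n₁ - 1 ∧ (j : ℕ) = n₁ then -1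
    else if (i : ℕ) = n₁ ∧ (j : ℕ) = n₁ then 1
    else 0

def interfaceVec (n₁ n₂ : ℕ) (i : Fin (n₁ + n₂)) : ℝ :=
  if (i : ℕ) = n₁ - 1 then -1 else if (i : ℕ) = n₁ then 1 else 0

theorem interfaceCut_eq_vecMulVec (n₁ n₂ : ℕ) :
    interfaceCut n₁ n₂ = vecMulVec (interfaceVec n₁ n₂) (Pi.single ⟨n₁, by omega⟩ 1) := by
  ext i j
  simp only [interfaceCut, interfaceVec, of_apply, vecMulVec_apply, Pi.single_apply, Fin.ext_iff]
  grind

theorem interfaceCut_mul_transpose (n₁ n₂ : ℕ) :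
    interfaceCut n₁ n₂ * (interfaceCut n₁ n₂)ᵀ =
      vecMulVec (interfaceVec n₁ n₂) (interfaceVec n₁ n₂) := by
  rw [interfaceCut_eq_vecMulVec, transpose_vecMulVec, vecMulVec_mul_vecMulVec,
    dotProduct_single_one, Pi.single_eq_same, one_smul]

theorem Sd_mul_transpose_sub_interfaceCut {n₁ n₂ : ℕ} (h₁ : 1 ≤ n₁) (h₂ : 1 ≤ n₂) (b₁ b₂ : ℝ) :
    Sd (n₁ + n₂) b₁ b₂ * (Sd (n₁ + n₂) b₁ b₂)ᵀ - interfaceCut n₁ n₂ * (interfaceCut n₁ n₂)ᵀ =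
      (fromBlocks (Sd n₁ b₁ 0 * (Sd n₁ b₁ 0)ᵀ) 0 0 (Sd n₂ 0 b₂ * (Sd n₂ 0 b₂)ᵀ)).submatrix
        finSumFinEquiv.symm finSumFinEquiv.symm := by
  ext i j
  obtain ⟨s, rfl⟩ := finSumFinEquiv.surjective i
  obtain ⟨t, rfl⟩ := finSumFinEquiv.surjective j
  rcases s with a | b <;> rcases t with a' | b' <;>
    simp only [interfaceCut_mul_transpose, Matrix.sub_apply, vecMulVec_apply, submatrix_apply,
      fromBlocks_apply₁₁, fromBlocks_apply₁₂, fromBlocks_apply₂₁, fromBlocks_apply₂₂,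
      Matrix.zero_apply, Sd_mul_transpose_apply, finSumFinEquiv_apply_left,
      finSumFinEquiv_apply_right, finSumFinEquiv_symm_apply_castAdd,
      finSumFinEquiv_symm_apply_natAdd, Fin.val_castAdd, Fin.val_natAdd, interfaceVec, sdGram,
      sdDiag, sdSuperdiag] <;>
    grind

theorem stmt7_general (n₁ n₂ m : ℕ) (h₁ : 1 ≤ n₁) (h₂ : 1 ≤ n₂)
    (b₁ b₂ : ℝ)
    (Mp : Finset (Fin m))
    (u₁ : Fin n₁ → ℝ) (u₂ : Fin n₂ → ℝ)
    (hu₁ : ∑ i, u₁ i ^ 2 = 1) (hu₂ : ∑ i, u₂ i ^ 2 = 1)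
    (α : ℝ) (hα : α = 1 ∨ α = -1)
    (C₁ C₂ : ℝ) (hC : C₁ ^ 2 + C₂ ^ 2 = 1)
    (u : Fin (n₁ + n₂) → ℝ)
    (hu : u = fun i =>
      Sum.elim (fun a => C₁ * u₁ a) (fun b => α * (C₂ * u₂ b)) (finSumFinEquiv.symm i))
    (σ : ℝ)
    (heig : (Sd (n₁ + n₂) b₁ b₂ * (Sd (n₁ + n₂) b₁ b₂)ᵀ) *ᵥ u = σ ^ 2 • u)
    (heig1 : (Sd n₁ b₁ 0 * (Sd n₁ b₁ 0)ᵀ) *ᵥ u₁ = σ ^ 2 • u₁)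
    (heig2 : (Sd n₂ 0 b₂ * (Sd n₂ 0 b₂)ᵀ) *ᵥ u₂ = σ ^ 2 • u₂) :
    let Dp : Matrix (Fin m) (Fin m) ℝ := Matrix.diagonal fun i => if i ∈ Mp then 1 else 0
    let Dm : Matrix (Fin m) (Fin m) ℝ := Matrix.diagonal fun i => if i ∈ Mp then 0 else 1
    let H : Matrix (Fin (n₁ + n₂)) (Fin (n₁ + n₂ + 1)) ℝ :=
      Matrix.of fun i j =>
        if (i : ℕ) = n₁ - 1 ∧ (j : ℕ) = n₁ then -1
        else if (i : ℕ) = n₁ ∧ (j : ℕ) = n₁ then 1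
        else 0
    let T : Matrix (Fin (n₁ + n₂) × Fin m) (Fin (n₁ + n₂) × Fin m) ℝ :=
      (Sd (n₁ + n₂) b₁ b₂ * (Sd (n₁ + n₂) b₁ b₂)ᵀ) ⊗ₖ Dp +
      (Sd (n₁ + n₂) b₁ b₂ * (Sd (n₁ + n₂) b₁ b₂)ᵀ - H * Hᵀ) ⊗ₖ Dm
    let P : Matrix (Fin (n₁ + n₂) × Fin m) (Fin (n₁ + n₂) × Fin m) ℝ :=
      vecMulVec u u ⊗ₖ Dp +
      ((fromBlocks (vecMulVec u₁ u₁) (0 : Matrix (Fin n₁) (Fin n₂) ℝ)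
          (0 : Matrix (Fin n₂) (Fin n₁) ℝ) (0 : Matrix (Fin n₂) (Fin n₂) ℝ)).submatrix
        finSumFinEquiv.symm finSumFinEquiv.symm) ⊗ₖ Dm +
      ((fromBlocks (0 : Matrix (Fin n₁) (Fin n₁) ℝ) (0 : Matrix (Fin n₁) (Fin n₂) ℝ)
          (0 : Matrix (Fin n₂) (Fin n₁) ℝ) (vecMulVec u₂ u₂)).submatrix
        finSumFinEquiv.symm finSumFinEquiv.symm) ⊗ₖ Dm
    Pᵀ = P ∧ P * P = P ∧ T * P = σ ^ 2 • P ∧ P * T = σ ^ 2 • P := by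
  intro Dp Dm H T P
  have unit₁ : u₁ ⬝ᵥ u₁ = 1 := by simpa [dotProduct, sq] using hu₁
  have unit₂ : u₂ ⬝ᵥ u₂ = 1 := by simpa [dotProduct, sq] using hu₂
  have unit : u ⬝ᵥ u = 1 := by
    have hα2 : α * α = 1 := by rcases hα with rfl | rfl <;> norm_num
    have hu' : u = Sum.elim (C₁ • u₁) (α • C₂ • u₂) ∘ finSumFinEquiv.symm := hu
    rw [hu', dotProduct_comp_equiv_symm, Function.comp_assoc, Equiv.symm_comp_self,
      Function.comp_id, sumElim_dotProduct_sumElim]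
    simp only [smul_dotProduct, dotProduct_smul, unit₁, unit₂, smul_eq_mul]
    linear_combination hC + C₂ ^ 2 * hα2
  have hplus : IsEigenprojection (Sd (n₁ + n₂) b₁ b₂ * (Sd (n₁ + n₂) b₁ b₂)ᵀ) (vecMulVec u u)
      (σ ^ 2) := .vecMulVec_self (isSymm_mul_transpose_self' _) unit heig
  have hminus : IsEigenprojection (Sd (n₁ + n₂) b₁ b₂ * (Sd (n₁ + n₂) b₁ b₂)ᵀ - H * Hᵀ)
      ((fromBlocks (vecMulVec u₁ u₁) 0 0 0 + fromBlocks 0 0 0 (vecMulVec u₂ u₂)).submatrix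
        finSumFinEquiv.symm finSumFinEquiv.symm) (σ ^ 2) := by
    rw [fromBlocks_add, add_zero, add_zero, zero_add, zero_add,
      show H = interfaceCut n₁ n₂ from rfl, Sd_mul_transpose_sub_interfaceCut h₁ h₂]
    exact ((IsEigenprojection.vecMulVec_self (isSymm_mul_transpose_self' _) unit₁ heig1).fromBlocks
      (.vecMulVec_self (isSymm_mul_transpose_self' _) unit₂ heig2)).submatrix_equiv _
  have key : IsEigenprojection T P (σ ^ 2) := by
    simp only [P, add_assoc, ← add_kronecker]
    exact hplus.kronecker_add_kronecker_indicator hminus (· ∈ Mp)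
  exact ⟨key.transpose_eq, key.mul_self, key.mul_left, key.mul_right⟩

/-- the combined eigenprojection
`P = uuᵀ ⊗ D₊ + blockdiag(u₁u₁ᵀ,0) ⊗ D₋ + blockdiag(0,u₂u₂ᵀ) ⊗ D₋`. -/
theorem stmt7 (n₁ n₂ m : ℕ) (h₁ : 1 ≤ n₁) (h₂ : 1 ≤ n₂) (hm : 1 ≤ m)
    (b₁ b₂ : ℝ) (hb₁ : b₁ = 0 ∨ b₁ = 1) (hb₂ : b₂ = 0 ∨ b₂ = 1)
    (Mp : Finset (Fin m))
    (u₁ : Fin n₁ → ℝ) (u₂ : Fin n₂ → ℝ)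
    (hu₁ : ∑ i, u₁ i ^ 2 = 1) (hu₂ : ∑ i, u₂ i ^ 2 = 1)
    (α : ℝ) (hα : α = 1 ∨ α = -1)
    (C₁ C₂ : ℝ) (hC₁ : 0 ≤ C₁) (hC₂ : 0 ≤ C₂) (hC : C₁ ^ 2 + C₂ ^ 2 = 1)
    (u : Fin (n₁ + n₂) → ℝ)
    (hu : u = fun i =>
      Sum.elim (fun a => C₁ * u₁ a) (fun b => α * (C₂ * u₂ b)) (finSumFinEquiv.symm i))
    (σ : ℝ) (hσ : 0 ≤ σ)
    (heig : (Sd (n₁ + n₂) b₁ b₂ * (Sd (n₁ + n₂) b₁ b₂)ᵀ) *ᵥ u = σ ^ 2 • u)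
    (heig1 : (Sd n₁ b₁ 0 * (Sd n₁ b₁ 0)ᵀ) *ᵥ u₁ = σ ^ 2 • u₁)
    (heig2 : (Sd n₂ 0 b₂ * (Sd n₂ 0 b₂)ᵀ) *ᵥ u₂ = σ ^ 2 • u₂) :
    let Dp : Matrix (Fin m) (Fin m) ℝ := Matrix.diagonal fun i => if i ∈ Mp then 1 else 0
    let Dm : Matrix (Fin m) (Fin m) ℝ := Matrix.diagonal fun i => if i ∈ Mp then 0 else 1
    let H : Matrix (Fin (n₁ + n₂)) (Fin (n₁ + n₂ + 1)) ℝ :=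
      Matrix.of fun i j =>
        if (i : ℕ) = n₁ - 1 ∧ (j : ℕ) = n₁ then -1
        else if (i : ℕ) = n₁ ∧ (j : ℕ) = n₁ then 1
        else 0
    let T : Matrix (Fin (n₁ + n₂) × Fin m) (Fin (n₁ + n₂) × Fin m) ℝ :=
      (Sd (n₁ + n₂) b₁ b₂ * (Sd (n₁ + n₂) b₁ b₂)ᵀ) ⊗ₖ Dp +
      (Sd (n₁ + n₂) b₁ b₂ * (Sd (n₁ + n₂) b₁ b₂)ᵀ - H * Hᵀ) ⊗ₖ Dm
    let P : Matrix (Fin (n₁ + n₂) × Fin m) (Fin (n₁ + n₂) × Fin m) ℝ :=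
      vecMulVec u u ⊗ₖ Dp +
      ((fromBlocks (vecMulVec u₁ u₁) (0 : Matrix (Fin n₁) (Fin n₂) ℝ)
          (0 : Matrix (Fin n₂) (Fin n₁) ℝ) (0 : Matrix (Fin n₂) (Fin n₂) ℝ)).submatrix
        finSumFinEquiv.symm finSumFinEquiv.symm) ⊗ₖ Dm +
      ((fromBlocks (0 : Matrix (Fin n₁) (Fin n₁) ℝ) (0 : Matrix (Fin n₁) (Fin n₂) ℝ)
          (0 : Matrix (Fin n₂) (Fin n₁) ℝ) (vecMulVec u₂ u₂)).submatrix
        finSumFinEquiv.symm finSumFinEquiv.symm) ⊗ₖ Dm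
    Pᵀ = P ∧ P * P = P ∧ T * P = σ ^ 2 • P ∧ P * T = σ ^ 2 • P :=
  stmt7_general n₁ n₂ m h₁ h₂ b₁ b₂ Mp u₁ u₂ hu₁ hu₂ α hα C₁ C₂ hC u hu σ heig heig1 heig2
end
end

section
/- (Homogeneous Neumann case of the singular-value matching lemma.) Let n₁, n₂ ≥ 1, n = n₁ + n₂, C₁ = √(n₁/n), C₂ = √(n₂/n). Suppose j ∈ {1,…,n} and j₁ ∈ {1,…,n₁} satisfy (n−j)/n = (n₁−j₁)/n₁ (equivalently j₁ = n₁ j / n), and set j₂ = j − j₁. Then: (i) j₂ ∈ {1,…,n₂} and (n−j)/n = (n₂−j₂)/n₂, so 2 sin(π(n−j)/(2n)) = 2 sin(π(n₁−j₁)/(2n₁)) = 2 sin(π(n₂−j₂)/(2n₂)); (ii) for every i ∈ {1,…,n₁}: √(2/n)·cos(π(n−j)(2i−1)/(2n)) = C₁·√(2/n₁)·cos(π(n₁−j₁)(2i−1)/(2n₁)) and √(2/n)·sin(π(n−j)(i−1)/n) = C₁·√(2/n₁)·sin(π(n₁−j₁)(i−1)/n₁); (iii) for every ℓ ∈ {1,…,n₂}: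 √(2/n)·cos(π(n−j)(2(n₁+ℓ)−1)/(2n)) = (−1)^{n₁−j₁}·C₂·√(2/n₂)·cos(π(n₂−j₂)(2ℓ−1)/(2n₂)); (iv) for every ℓ ∈ {1,…,n₂+1}: √(2/n)·sin(π(n−j)(n₁+ℓ−1)/n) = (−1)^{n₁−j₁}·C₂·√(2/n₂)·sin(π(n₂−j₂)(ℓ−1)/n₂). -/
/-!
All the angles are multiples of `π θ` for the common ratio `θ = (n - j)/n = (n₁ - j₁)/n₁`;
the matching condition says `j₁ n = n₁ j`, so `j₂ n = n₂ j` and `θ = (n₂ - j₂)/n₂` as well.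
On the second subregion the positions are shifted by `n₁`, which adds `π θ n₁ = π (n₁ - j₁)` to
every angle and hence the sign `(-1)^(n₁ - j₁)`. The amplitudes match because
`√(n₁/n) √(2/n₁) = √(2/n)`.
-/

open Real

/-- For a singular value of `S_d(n; 0, 0)` with ratio `θ = (n - j)/n`, entry `i` of the left
(right) singular vector is `√(2/n) * cosMode θ i` (`√(2/n) * sinMode θ i`). -/
noncomputable def cosMode (θ x : ℝ) : ℝ := cos (π * θ * (2 * x - 1) / 2)

noncomputable def sinMode (θ x : ℝ) : ℝ := sin (π * θ * (x - 1))

lemma cos_eq_cosMode (N J x : ℝ) :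
    cos (π * (N - J) * (2 * x - 1) / (2 * N)) = cosMode ((N - J) / N) x := by
  rw [cosMode]; congr 1; ring

lemma sin_eq_sinMode (N J x : ℝ) :
    sin (π * (N - J) * (x - 1) / N) = sinMode ((N - J) / N) x := by
  rw [sinMode]; congr 1; ring

lemma cosMode_add_of_mul_eq_nat {θ a : ℝ} {m : ℕ} (h : θ * a = m) (x : ℝ) :
    cosMode θ (a + x) = (-1) ^ m * cosMode θ x := by
  rw [cosMode, cosMode, ← cos_add_nat_mul_pi]
  congr 1
  linear_combination π * h

lemma sinMode_add_of_mul_eq_nat {θ a : ℝ} {m : ℕ} (h : θ * a = m) (x : ℝ) :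
    sinMode θ (a + x) = (-1) ^ m * sinMode θ x := by
  rw [sinMode, sinMode, ← sin_add_nat_mul_pi]
  congr 1
  linear_combination π * h

lemma pi_mul_sub_div_two_mul (N J : ℝ) : π * (N - J) / (2 * N) = π * ((N - J) / N) / 2 := by
  ring

lemma sub_div_eq_sub_div_iff {N J M K : ℝ} (hN : N ≠ 0) (hM : M ≠ 0) :
    (N - J) / N = (M - K) / M ↔ J * M = K * N := by
  rw [sub_div, sub_div, div_self hN, div_self hM, sub_right_inj, div_eq_div_iff hN hM]

lemma sqrt_div_mul_sqrt_div {a b c : ℝ} (ha : 0 < a) (hc : 0 ≤ c) :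
    √(a / b) * √(c / a) = √(c / b) := by
  rw [← sqrt_mul' _ (div_nonneg hc ha.le), div_mul_div_comm, mul_comm a c,
    mul_div_mul_right _ _ ha.ne']

lemma mul_eq_sub_mul_add {n₁ n₂ j j₁ : ℕ} (h : j * n₁ = j₁ * (n₁ + n₂)) :
    j * n₂ = (j - j₁) * (n₁ + n₂) := by
  rw [Nat.sub_mul, ← h, mul_add, Nat.add_sub_cancel_left]

lemma one_le_and_le_of_mul_eq_mul {a b c n : ℕ} (h : c * b = a * n) (hb : 1 ≤ b) (hc : 1 ≤ c)
    (hcn : c ≤ n) : 1 ≤ a ∧ a ≤ b := by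
  refine ⟨Nat.pos_of_ne_zero ?_, Nat.le_of_mul_le_mul_right ?_ (hc.trans hcn)⟩
  · rintro rfl
    simp only [zero_mul, mul_eq_zero] at h
    omega
  · rw [← h, mul_comm c]
    exact Nat.mul_le_mul_left b hcn

theorem stmt8_general (n₁ n₂ : ℕ) (h₂ : 1 ≤ n₂)
    (j j₁ : ℕ) (hj : 1 ≤ j ∧ j ≤ n₁ + n₂) (hj₁ : 1 ≤ j₁ ∧ j₁ ≤ n₁)
    (hmatch : (((n₁ : ℝ) + n₂) - j) / ((n₁ : ℝ) + n₂) = ((n₁ : ℝ) - j₁) / n₁) :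
    let n : ℕ := n₁ + n₂
    let C₁ : ℝ := Real.sqrt ((n₁ : ℝ) / n)
    let C₂ : ℝ := Real.sqrt ((n₂ : ℝ) / n)
    let j₂ : ℕ := j - j₁
    -- (i)
    (1 ≤ j₂ ∧ j₂ ≤ n₂ ∧
      ((n : ℝ) - j) / n = ((n₂ : ℝ) - j₂) / n₂ ∧
      2 * Real.sin (π * ((n : ℝ) - j) / (2 * n)) =
        2 * Real.sin (π * ((n₁ : ℝ) - j₁) / (2 * n₁)) ∧
      2 * Real.sin (π * ((n : ℝ) - j) / (2 * n)) =
        2 * Real.sin (π * ((n₂ : ℝ) - j₂) / (2 * n₂))) ∧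
    -- (ii)
    (∀ i : ℕ, 1 ≤ i → i ≤ n₁ →
      Real.sqrt (2 / n) * Real.cos (π * ((n : ℝ) - j) * (2 * (i : ℝ) - 1) / (2 * n)) =
        C₁ * (Real.sqrt (2 / n₁) *
          Real.cos (π * ((n₁ : ℝ) - j₁) * (2 * (i : ℝ) - 1) / (2 * n₁))) ∧
      Real.sqrt (2 / n) * Real.sin (π * ((n : ℝ) - j) * ((i : ℝ) - 1) / n) =
        C₁ * (Real.sqrt (2 / n₁) *
          Real.sin (π * ((n₁ : ℝ) - j₁) * ((i : ℝ) - 1) / n₁))) ∧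
    -- (iii)
    (∀ l : ℕ, 1 ≤ l → l ≤ n₂ →
      Real.sqrt (2 / n) *
          Real.cos (π * ((n : ℝ) - j) * (2 * ((n₁ : ℝ) + l) - 1) / (2 * n)) =
        (-1 : ℝ) ^ (n₁ - j₁) * (C₂ * (Real.sqrt (2 / n₂) *
          Real.cos (π * ((n₂ : ℝ) - j₂) * (2 * (l : ℝ) - 1) / (2 * n₂))))) ∧
    -- (iv)
    (∀ l : ℕ, 1 ≤ l → l ≤ n₂ + 1 →
      Real.sqrt (2 / n) *
          Real.sin (π * ((n : ℝ) - j) * ((n₁ : ℝ) + l - 1) / n) =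
        (-1 : ℝ) ^ (n₁ - j₁) * (C₂ * (Real.sqrt (2 / n₂) *
          Real.sin (π * ((n₂ : ℝ) - j₂) * ((l : ℝ) - 1) / n₂)))) := by
  intro n C₁ C₂ j₂
  have hn : (n : ℝ) = n₁ + n₂ := Nat.cast_add n₁ n₂
  have hn₀ : (n : ℝ) ≠ 0 := by rw [hn]; positivity
  have hn₁ : (0 : ℝ) < n₁ := by exact_mod_cast hj₁.1.trans hj₁.2
  have hn₂ : (0 : ℝ) < n₂ := by exact_mod_cast h₂
  have hθ₁ : ((n : ℝ) - j) / n = ((n₁ : ℝ) - j₁) / n₁ := by rwa [hn]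
  have hmul₁ : j * n₁ = j₁ * n := by
    exact_mod_cast (sub_div_eq_sub_div_iff hn₀ hn₁.ne').1 hθ₁
  have hmul₂ : j * n₂ = j₂ * n := mul_eq_sub_mul_add hmul₁
  have hθ₂ : ((n : ℝ) - j) / n = ((n₂ : ℝ) - j₂) / n₂ :=
    (sub_div_eq_sub_div_iff hn₀ hn₂.ne').2 (by exact_mod_cast hmul₂)
  have hshift : ((n : ℝ) - j) / n * n₁ = ((n₁ - j₁ : ℕ) : ℝ) := by
    rw [hθ₁, div_mul_cancel₀ _ hn₁.ne', Nat.cast_sub hj₁.2]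
  have hC₁ : C₁ * √(2 / n₁) = √(2 / n) := sqrt_div_mul_sqrt_div hn₁ zero_le_two
  have hC₂ : C₂ * √(2 / n₂) = √(2 / n) := sqrt_div_mul_sqrt_div hn₂ zero_le_two
  obtain ⟨hj₂, hj₂n₂⟩ := one_le_and_le_of_mul_eq_mul hmul₂ h₂ hj.1 hj.2
  refine ⟨⟨hj₂, hj₂n₂, hθ₂, ?_, ?_⟩, fun i _ _ => ⟨?_, ?_⟩, fun l _ _ => ?_, fun l _ _ => ?_⟩
  · rw [pi_mul_sub_div_two_mul, pi_mul_sub_div_two_mul, hθ₁]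
  · rw [pi_mul_sub_div_two_mul, pi_mul_sub_div_two_mul, hθ₂]
  · rw [cos_eq_cosMode, cos_eq_cosMode, hθ₁, ← mul_assoc, hC₁]
  · rw [sin_eq_sinMode, sin_eq_sinMode, hθ₁, ← mul_assoc, hC₁]
  · rw [cos_eq_cosMode, cos_eq_cosMode, cosMode_add_of_mul_eq_nat hshift, hθ₂, ← hC₂]
    ring
  · rw [sin_eq_sinMode, sin_eq_sinMode, sinMode_add_of_mul_eq_nat hshift, hθ₂, ← hC₂]
    ring

/-- singular-value matching lemma, homogeneous Neumann (zero-flux) case. -/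
theorem stmt8 (n₁ n₂ : ℕ) (h₁ : 1 ≤ n₁) (h₂ : 1 ≤ n₂)
    (j j₁ : ℕ) (hj : 1 ≤ j ∧ j ≤ n₁ + n₂) (hj₁ : 1 ≤ j₁ ∧ j₁ ≤ n₁)
    (hmatch : (((n₁ : ℝ) + n₂) - j) / ((n₁ : ℝ) + n₂) = ((n₁ : ℝ) - j₁) / n₁) :
    let n : ℕ := n₁ + n₂
    let C₁ : ℝ := Real.sqrt ((n₁ : ℝ) / n)
    let C₂ : ℝ := Real.sqrt ((n₂ : ℝ) / n)
    let j₂ : ℕ := j - j₁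
    -- (i)
    (1 ≤ j₂ ∧ j₂ ≤ n₂ ∧
      ((n : ℝ) - j) / n = ((n₂ : ℝ) - j₂) / n₂ ∧
      2 * Real.sin (π * ((n : ℝ) - j) / (2 * n)) =
        2 * Real.sin (π * ((n₁ : ℝ) - j₁) / (2 * n₁)) ∧
      2 * Real.sin (π * ((n : ℝ) - j) / (2 * n)) =
        2 * Real.sin (π * ((n₂ : ℝ) - j₂) / (2 * n₂))) ∧
    -- (ii)
    (∀ i : ℕ, 1 ≤ i → i ≤ n₁ →
      Real.sqrt (2 / n) * Real.cos (π * ((n : ℝ) - j) * (2 * (i : ℝ) - 1) / (2 * n)) =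
        C₁ * (Real.sqrt (2 / n₁) *
          Real.cos (π * ((n₁ : ℝ) - j₁) * (2 * (i : ℝ) - 1) / (2 * n₁))) ∧
      Real.sqrt (2 / n) * Real.sin (π * ((n : ℝ) - j) * ((i : ℝ) - 1) / n) =
        C₁ * (Real.sqrt (2 / n₁) *
          Real.sin (π * ((n₁ : ℝ) - j₁) * ((i : ℝ) - 1) / n₁))) ∧
    -- (iii)
    (∀ l : ℕ, 1 ≤ l → l ≤ n₂ →
      Real.sqrt (2 / n) *
          Real.cos (π * ((n : ℝ) - j) * (2 * ((n₁ : ℝ) + l) - 1) / (2 * n)) =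
        (-1 : ℝ) ^ (n₁ - j₁) * (C₂ * (Real.sqrt (2 / n₂) *
          Real.cos (π * ((n₂ : ℝ) - j₂) * (2 * (l : ℝ) - 1) / (2 * n₂))))) ∧
    -- (iv)
    (∀ l : ℕ, 1 ≤ l → l ≤ n₂ + 1 →
      Real.sqrt (2 / n) *
          Real.sin (π * ((n : ℝ) - j) * ((n₁ : ℝ) + l - 1) / n) =
        (-1 : ℝ) ^ (n₁ - j₁) * (C₂ * (Real.sqrt (2 / n₂) *
          Real.sin (π * ((n₂ : ℝ) - j₂) * ((l : ℝ) - 1) / n₂)))) :=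
  stmt8_general n₁ n₂ h₂ j j₁ hj hj₁ hmatch
end

section
/- (Mixed boundary case of the singular-value matching lemma.) Let n₁, n₂ ≥ 1, n = n₁ + n₂, C₁ = √(2n₁/(2n+1)), C₂ = √((2n₂+1)/(2n+1)). Suppose j ∈ {1,…,n} and j₁ ∈ {1,…,n₁} satisfy (n−j+1/2)/(2n+1) = (n₁−j₁)/(2n₁) (equivalently j₁ = 2n₁ j /(2n+1)), and set j₂ = j − j₁. Write θ = π(n−j+1/2)/(2n+1), θ₁ = π(n₁−j₁)/(2n₁), θ₂ = π(n₂−j₂+1/2)/(2n₂+1). Then: (i) j₂ ∈ {1,…,n₂} and θ = θ₂, so 2 sin θ = 2 sin θ₁ = 2 sin θ₂; (ii) for every i ∈ {1,…,n₁}: √(2/(n+1/2))·cos(θ(2i−1)) = C₁·√(2/n₁)·cos(θ₁(2i−1)) and √(2/(n+1/2))·sin(2θ(i−1)) = C₁·√(2/n₁)·sin(2θ₁(i−1)); (iii) for every ℓ ∈ {1,…,n₂}: √(2/(n+1/2))·cos(θ(2(n₁+ℓ)−1)) = (−1)^{n₁−j₁}·C₂·√(2/(n₂+1/2))·cos(θ₂(2ℓ−1));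 (iv) for every ℓ ∈ {1,…,n₂+1}: √(2/(n+1/2))·sin(2θ(n₁+ℓ−1)) = (−1)^{n₁−j₁}·C₂·√(2/(n₂+1/2))·sin(2θ₂(ℓ−1)). -/
/-!
The matching condition says exactly `θ = θ₁`; cross-multiplied it reads `j₁ (2n + 1) = 2 n₁ j`,
and since `2n + 1 = 2n₁ + (2n₂ + 1)` this is `j₂ (2n + 1) = j (2n₂ + 1)`, i.e. `θ = θ₂`
(and `j ≤ n` forces `j₂ ≤ n₂`). The normalisations then combine as
`C₁ √(2/n₁) = C₂ √(2/(n₂ + 1/2)) = √(2/(n + 1/2))`, and on the second subregion the arguments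
are shifted by `2 n₁ θ = (n₁ - j₁) π`, which only contributes the sign `(-1) ^ (n₁ - j₁)`.
-/

open Real

lemma sqrt_two_mul_div_mul_sqrt_two_div {a : ℝ} (ha : 0 < a) (c : ℝ) :
    √(2 * a / (2 * c + 1)) * √(2 / a) = √(2 / (c + 1 / 2)) := by
  rw [← sqrt_mul' _ (by positivity)]
  congr 1
  field_simp

lemma cos_mul_two_mul_add_sub_one {θ : ℝ} {m k : ℕ} (h : 2 * m * θ = k * π) (x : ℝ) :
    cos (θ * (2 * (m + x) - 1)) = (-1) ^ k * cos (θ * (2 * x - 1)) := by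
  rw [← cos_add_nat_mul_pi]
  congr 1
  linear_combination h

lemma sin_two_mul_mul_add_sub_one {θ : ℝ} {m k : ℕ} (h : 2 * m * θ = k * π) (x : ℝ) :
    sin (2 * θ * (m + x - 1)) = (-1) ^ k * sin (2 * θ * (x - 1)) := by
  rw [← sin_add_nat_mul_pi]
  congr 1
  linear_combination h

lemma mul_two_add_one_eq_of_div_eq_div {n₁ n₂ j j₁ : ℕ} (h₁ : 1 ≤ n₁)
    (h : (((n₁ : ℝ) + n₂) - j + 1 / 2) / (2 * ((n₁ : ℝ) + n₂) + 1) = ((n₁ : ℝ) - j₁) / (2 * n₁)) :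
    j₁ * (2 * (n₁ + n₂) + 1) = 2 * n₁ * j := by
  have : (1 : ℝ) ≤ n₁ := by exact_mod_cast h₁
  rw [div_eq_div_iff (by positivity) (by positivity)] at h
  exact_mod_cast (by linear_combination h : (j₁ : ℝ) * (2 * (n₁ + n₂) + 1) = 2 * n₁ * j)

lemma sub_mul_two_mul_add_add_one {n₁ n₂ j j₁ : ℕ} (hj₁ : j₁ ≤ j)
    (h : j₁ * (2 * (n₁ + n₂) + 1) = 2 * n₁ * j) :
    (j - j₁) * (2 * (n₁ + n₂) + 1) = j * (2 * n₂ + 1) := by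
  obtain ⟨d, rfl⟩ := Nat.exists_eq_add_of_le hj₁
  rw [Nat.add_sub_cancel_left]
  nlinarith

lemma le_of_mul_two_add_one_eq {N M J K : ℕ} (hJ : J ≤ N)
    (h : K * (2 * N + 1) = J * (2 * M + 1)) : K ≤ M := by
  nlinarith

lemma pi_mul_sub_add_half_div_eq_of_mul_eq {N M J K : ℕ} (h : K * (2 * N + 1) = J * (2 * M + 1)) :
    π * ((N : ℝ) - J + 1 / 2) / (2 * N + 1) = π * ((M : ℝ) - K + 1 / 2) / (2 * M + 1) := by
  have h' : (K : ℝ) * (2 * N + 1) = J * (2 * M + 1) := by exact_mod_cast h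
  rw [div_eq_div_iff (by positivity) (by positivity)]
  linear_combination π * h'

theorem stmt9_general (n₁ n₂ : ℕ) (h₁ : 1 ≤ n₁)
    (j j₁ : ℕ) (hj : 1 ≤ j ∧ j ≤ n₁ + n₂) (hj₁ : 1 ≤ j₁ ∧ j₁ ≤ n₁)
    (hmatch : (((n₁ : ℝ) + n₂) - j + 1/2) / (2 * ((n₁ : ℝ) + n₂) + 1) =
      ((n₁ : ℝ) - j₁) / (2 * n₁)) :
    let n : ℕ := n₁ + n₂
    let C₁ : ℝ := Real.sqrt (2 * (n₁ : ℝ) / (2 * (n : ℝ) + 1))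
    let C₂ : ℝ := Real.sqrt ((2 * (n₂ : ℝ) + 1) / (2 * (n : ℝ) + 1))
    let j₂ : ℕ := j - j₁
    let θ : ℝ := π * ((n : ℝ) - j + 1/2) / (2 * (n : ℝ) + 1)
    let θ₁ : ℝ := π * ((n₁ : ℝ) - j₁) / (2 * (n₁ : ℝ))
    let θ₂ : ℝ := π * ((n₂ : ℝ) - j₂ + 1/2) / (2 * (n₂ : ℝ) + 1)
    -- (i)
    (1 ≤ j₂ ∧ j₂ ≤ n₂ ∧ θ = θ₂ ∧
      2 * Real.sin θ = 2 * Real.sin θ₁ ∧ 2 * Real.sin θ = 2 * Real.sin θ₂) ∧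
    -- (ii)
    (∀ i : ℕ, 1 ≤ i → i ≤ n₁ →
      Real.sqrt (2 / ((n : ℝ) + 1/2)) * Real.cos (θ * (2 * (i : ℝ) - 1)) =
        C₁ * (Real.sqrt (2 / (n₁ : ℝ)) * Real.cos (θ₁ * (2 * (i : ℝ) - 1))) ∧
      Real.sqrt (2 / ((n : ℝ) + 1/2)) * Real.sin (2 * θ * ((i : ℝ) - 1)) =
        C₁ * (Real.sqrt (2 / (n₁ : ℝ)) * Real.sin (2 * θ₁ * ((i : ℝ) - 1)))) ∧
    -- (iii)
    (∀ l : ℕ, 1 ≤ l → l ≤ n₂ →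
      Real.sqrt (2 / ((n : ℝ) + 1/2)) *
          Real.cos (θ * (2 * ((n₁ : ℝ) + l) - 1)) =
        (-1 : ℝ) ^ (n₁ - j₁) * (C₂ * (Real.sqrt (2 / ((n₂ : ℝ) + 1/2)) *
          Real.cos (θ₂ * (2 * (l : ℝ) - 1))))) ∧
    -- (iv)
    (∀ l : ℕ, 1 ≤ l → l ≤ n₂ + 1 →
      Real.sqrt (2 / ((n : ℝ) + 1/2)) *
          Real.sin (2 * θ * ((n₁ : ℝ) + l - 1)) =
        (-1 : ℝ) ^ (n₁ - j₁) * (C₂ * (Real.sqrt (2 / ((n₂ : ℝ) + 1/2)) *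
          Real.sin (2 * θ₂ * ((l : ℝ) - 1))))) := by
  intro n C₁ C₂ j₂ θ θ₁ θ₂
  have hn₁ : (0 : ℝ) < n₁ := by exact_mod_cast h₁
  have hkey := mul_two_add_one_eq_of_div_eq_div h₁ hmatch
  have hj₁j : j₁ < j := by nlinarith
  have hkey₂ := sub_mul_two_mul_add_add_one hj₁j.le hkey
  have hθ₁ : θ = θ₁ := by
    simp only [θ, θ₁, n, mul_div_assoc, Nat.cast_add, hmatch]
  have hθ₂ : θ = θ₂ := pi_mul_sub_add_half_div_eq_of_mul_eq hkey₂
  have hperiod : 2 * n₁ * θ = ((n₁ - j₁ : ℕ) : ℝ) * π := by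
    rw [hθ₁, Nat.cast_sub hj₁.2]
    simp only [θ₁]
    field_simp
  have hC₁ : C₁ * √(2 / n₁) = √(2 / ((n : ℝ) + 1 / 2)) :=
    sqrt_two_mul_div_mul_sqrt_two_div hn₁ _
  have hC₂ : C₂ * √(2 / ((n₂ : ℝ) + 1 / 2)) = √(2 / ((n : ℝ) + 1 / 2)) := by
    simpa [mul_add] using sqrt_two_mul_div_mul_sqrt_two_div (a := n₂ + 1 / 2) (by positivity) n
  refine ⟨⟨by omega, le_of_mul_two_add_one_eq hj.2 hkey₂, hθ₂, by rw [hθ₁], by rw [hθ₂]⟩,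
    fun i _ _ => ⟨?_, ?_⟩, fun l _ _ => ?_, fun l _ _ => ?_⟩
  · rw [← mul_assoc, hC₁, hθ₁]
  · rw [← mul_assoc, hC₁, hθ₁]
  · rw [cos_mul_two_mul_add_sub_one hperiod, ← mul_assoc C₂, hC₂, hθ₂, mul_left_comm]
  · rw [sin_two_mul_mul_add_sub_one hperiod, ← mul_assoc C₂, hC₂, hθ₂, mul_left_comm]

/-- singular-value matching lemma, Mixed boundary case. -/
theorem stmt9 (n₁ n₂ : ℕ) (h₁ : 1 ≤ n₁) (h₂ : 1 ≤ n₂)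
    (j j₁ : ℕ) (hj : 1 ≤ j ∧ j ≤ n₁ + n₂) (hj₁ : 1 ≤ j₁ ∧ j₁ ≤ n₁)
    (hmatch : (((n₁ : ℝ) + n₂) - j + 1/2) / (2 * ((n₁ : ℝ) + n₂) + 1) =
      ((n₁ : ℝ) - j₁) / (2 * n₁)) :
    let n : ℕ := n₁ + n₂
    let C₁ : ℝ := Real.sqrt (2 * (n₁ : ℝ) / (2 * (n : ℝ) + 1))
    let C₂ : ℝ := Real.sqrt ((2 * (n₂ : ℝ) + 1) / (2 * (n : ℝ) + 1))
    let j₂ : ℕ := j - j₁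
    let θ : ℝ := π * ((n : ℝ) - j + 1/2) / (2 * (n : ℝ) + 1)
    let θ₁ : ℝ := π * ((n₁ : ℝ) - j₁) / (2 * (n₁ : ℝ))
    let θ₂ : ℝ := π * ((n₂ : ℝ) - j₂ + 1/2) / (2 * (n₂ : ℝ) + 1)
    -- (i)
    (1 ≤ j₂ ∧ j₂ ≤ n₂ ∧ θ = θ₂ ∧
      2 * Real.sin θ = 2 * Real.sin θ₁ ∧ 2 * Real.sin θ = 2 * Real.sin θ₂) ∧
    -- (ii)
    (∀ i : ℕ, 1 ≤ i → i ≤ n₁ →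
      Real.sqrt (2 / ((n : ℝ) + 1/2)) * Real.cos (θ * (2 * (i : ℝ) - 1)) =
        C₁ * (Real.sqrt (2 / (n₁ : ℝ)) * Real.cos (θ₁ * (2 * (i : ℝ) - 1))) ∧
      Real.sqrt (2 / ((n : ℝ) + 1/2)) * Real.sin (2 * θ * ((i : ℝ) - 1)) =
        C₁ * (Real.sqrt (2 / (n₁ : ℝ)) * Real.sin (2 * θ₁ * ((i : ℝ) - 1)))) ∧
    -- (iii)
    (∀ l : ℕ, 1 ≤ l → l ≤ n₂ →
      Real.sqrt (2 / ((n : ℝ) + 1/2)) *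
          Real.cos (θ * (2 * ((n₁ : ℝ) + l) - 1)) =
        (-1 : ℝ) ^ (n₁ - j₁) * (C₂ * (Real.sqrt (2 / ((n₂ : ℝ) + 1/2)) *
          Real.cos (θ₂ * (2 * (l : ℝ) - 1))))) ∧
    -- (iv)
    (∀ l : ℕ, 1 ≤ l → l ≤ n₂ + 1 →
      Real.sqrt (2 / ((n : ℝ) + 1/2)) *
          Real.sin (2 * θ * ((n₁ : ℝ) + l - 1)) =
        (-1 : ℝ) ^ (n₁ - j₁) * (C₂ * (Real.sqrt (2 / ((n₂ : ℝ) + 1/2)) *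
          Real.sin (2 * θ₂ * ((l : ℝ) - 1))))) :=
  stmt9_general n₁ n₂ h₁ j j₁ hj hj₁ hmatch
end

section
/- (Open boundary case of the singular-value matching lemma.) Let n₁, n₂ ≥ 1, n = n₁ + n₂, C₁ = √((2n₁+1)/(2n+2)), C₂ = √((2n₂+1)/(2n+2)). Suppose j ∈ {1,…,n} and j₁ ∈ {1,…,n₁} satisfy (n−j+1)/(2(n+1)) = (n₁−j₁+1/2)/(2n₁+1) (equivalently j₁ = j(2n₁+1)/(2(n+1))), and set j₂ = j − j₁. Write θ = π(n−j+1)/(2(n+1)), θ₁ = π(n₁−j₁+1/2)/(2n₁+1), θ₂ = π(n₂−j₂+1/2)/(2n₂+1). Then: (i) j₂ ∈ {1,…,n₂} and θ = θ₂, so 2 sin θ = 2 sin θ₁ = 2 sin θ₂; (ii) for every i ∈ {1,…,n₁}: √(2/(n+1))·sin(2θ i) = C₁·√(2/(n₁+1/2))·sin(2θ₁ i) and √(2/(n+1))·cos(θ(2i−1)) = C₁·√(2/(n₁+1/2))·cos(θ₁(2i−1)); (iii) for every ℓ ∈ {1,…,n₂}: √(2/(n+1))·sin(2θ(n₁+ℓ))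 = (−1)^{n₁−j₁}·C₂·√(2/(n₂+1/2))·cos(θ₂(2ℓ−1)); (iv) for every ℓ ∈ {1,…,n₂+1}: √(2/(n+1))·cos(θ(2(n₁+ℓ)−1)) = −(−1)^{n₁−j₁}·C₂·√(2/(n₂+1/2))·sin(2θ₂(ℓ−1)). -/
/-!
The matching condition reads `1/2 - j/(2n+2) = 1/2 - j₁/(2n₁+1)`, i.e. `j₁/(2n₁+1) = j/(2n+2)`;
subtracting numerators and denominators gives the same ratio `j₂/(2n₂+1)`, whence
`θ = θ₁ = θ₂`, and `1 ≤ j ≤ n` forces `j₁ ≤ n₁` and `1 ≤ j₂ ≤ n₂`.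
On the first block the identities are the rescaling `C₁ · √(2/(n₁+1/2)) = √(2/(n+1))`; on the
second block the shift by `θ (2n₁+1) = (n₁ - j₁) π + π/2` turns sines into cosines and cosines
into sines, up to the sign `(-1)^(n₁-j₁)`.
-/

open Real

section Ratios

lemma mul_eq_mul_iff_of_sub_add_div_eq {m k j N : ℝ} (hm : 0 < 2 * m + 1) (hN : 0 < N + 1) :
    (N - j + 1) / (2 * (N + 1)) = (m - k + 1 / 2) / (2 * m + 1) ↔
      k * (2 * N + 2) = j * (2 * m + 1) := by
  rw [div_eq_div_iff (mul_pos two_pos hN).ne' hm.ne']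
  constructor <;> intro h <;> linarith

variable {m m' k j : ℕ}

lemma le_of_mul_eq_mul_of_le {N : ℕ} (hj : j ≤ N) (h : k * (2 * N + 2) = j * (2 * m + 1)) :
    k ≤ m := by
  nlinarith

lemma lt_of_mul_eq_mul_of_le {N : ℕ} (hmN : m ≤ N) (hj : 0 < j)
    (h : k * (2 * N + 2) = j * (2 * m + 1)) : k < j :=
  Nat.lt_of_mul_lt_mul_right (a := 2 * N + 2) (by rw [h]; gcongr; omega)

lemma sub_mul_eq_mul_of_mul_eq_mul (h : k * (2 * (m + m') + 2) = j * (2 * m + 1)) :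
    (j - k) * (2 * (m + m') + 2) = j * (2 * m' + 1) := by
  rw [Nat.sub_mul, h, show j * (2 * (m + m') + 2) = j * (2 * m + 1) + j * (2 * m' + 1) by ring,
    Nat.add_sub_cancel_left]

end Ratios

section Trigonometry

lemma sqrt_div_mul_sqrt_div_s10 {m N : ℝ} (hm : 0 < 2 * m + 1) (hN : 0 < N + 1) :
    √((2 * m + 1) / (2 * N + 2)) * √(2 / (m + 1 / 2)) = √(2 / (N + 1)) := by
  rw [← sqrt_mul (div_nonneg hm.le (by linarith))]
  congr 1
  field_simp

lemma pi_mul_sub_add_half_div_mul {m k : ℕ} (hk : k ≤ m) :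
    π * ((m : ℝ) - k + 1 / 2) / (2 * m + 1) * (2 * m + 1) = ((m - k : ℕ) : ℝ) * π + π / 2 := by
  rw [Nat.cast_sub hk]
  field_simp

variable {θ m : ℝ} {k : ℕ}

lemma sin_two_mul_mul_add_of_mul_eq (hθ : θ * (2 * m + 1) = k * π + π / 2) (l : ℝ) :
    sin (2 * θ * (m + l)) = (-1) ^ k * cos (θ * (2 * l - 1)) := by
  rw [show 2 * θ * (m + l) = θ * (2 * l - 1) + π / 2 + k * π by linear_combination hθ,
    sin_add_nat_mul_pi, sin_add_pi_div_two]

lemma cos_mul_two_mul_add_sub_one_of_mul_eq (hθ : θ * (2 * m + 1) = k * π + π / 2) (l : ℝ) :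
    cos (θ * (2 * (m + l) - 1)) = -((-1) ^ k * sin (2 * θ * (l - 1))) := by
  rw [show θ * (2 * (m + l) - 1) = 2 * θ * (l - 1) + π / 2 + k * π by linear_combination hθ,
    cos_add_nat_mul_pi, cos_add_pi_div_two]
  ring

end Trigonometry

theorem stmt10_general (n₁ n₂ : ℕ)
    (j j₁ : ℕ) (hj : 1 ≤ j ∧ j ≤ n₁ + n₂)
    (hmatch : (((n₁ : ℝ) + n₂) - j + 1) / (2 * (((n₁ : ℝ) + n₂) + 1)) =
      ((n₁ : ℝ) - j₁ + 1/2) / (2 * (n₁ : ℝ) + 1)) :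
    let n : ℕ := n₁ + n₂
    let C₁ : ℝ := Real.sqrt ((2 * (n₁ : ℝ) + 1) / (2 * (n : ℝ) + 2))
    let C₂ : ℝ := Real.sqrt ((2 * (n₂ : ℝ) + 1) / (2 * (n : ℝ) + 2))
    let j₂ : ℕ := j - j₁
    let θ : ℝ := π * ((n : ℝ) - j + 1) / (2 * ((n : ℝ) + 1))
    let θ₁ : ℝ := π * ((n₁ : ℝ) - j₁ + 1/2) / (2 * (n₁ : ℝ) + 1)
    let θ₂ : ℝ := π * ((n₂ : ℝ) - j₂ + 1/2) / (2 * (n₂ : ℝ) + 1)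
    -- (i)
    (1 ≤ j₂ ∧ j₂ ≤ n₂ ∧ θ = θ₂ ∧
      2 * Real.sin θ = 2 * Real.sin θ₁ ∧ 2 * Real.sin θ = 2 * Real.sin θ₂) ∧
    -- (ii)
    (∀ i : ℕ, 1 ≤ i → i ≤ n₁ →
      Real.sqrt (2 / ((n : ℝ) + 1)) * Real.sin (2 * θ * (i : ℝ)) =
        C₁ * (Real.sqrt (2 / ((n₁ : ℝ) + 1/2)) * Real.sin (2 * θ₁ * (i : ℝ))) ∧
      Real.sqrt (2 / ((n : ℝ) + 1)) * Real.cos (θ * (2 * (i : ℝ) - 1)) =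
        C₁ * (Real.sqrt (2 / ((n₁ : ℝ) + 1/2)) * Real.cos (θ₁ * (2 * (i : ℝ) - 1)))) ∧
    -- (iii)
    (∀ l : ℕ, 1 ≤ l → l ≤ n₂ →
      Real.sqrt (2 / ((n : ℝ) + 1)) * Real.sin (2 * θ * ((n₁ : ℝ) + l)) =
        (-1 : ℝ) ^ (n₁ - j₁) * (C₂ * (Real.sqrt (2 / ((n₂ : ℝ) + 1/2)) *
          Real.cos (θ₂ * (2 * (l : ℝ) - 1))))) ∧
    -- (iv)
    (∀ l : ℕ, 1 ≤ l → l ≤ n₂ + 1 →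
      Real.sqrt (2 / ((n : ℝ) + 1)) * Real.cos (θ * (2 * ((n₁ : ℝ) + l) - 1)) =
        -((-1 : ℝ) ^ (n₁ - j₁)) * (C₂ * (Real.sqrt (2 / ((n₂ : ℝ) + 1/2)) *
          Real.sin (2 * θ₂ * ((l : ℝ) - 1))))) := by
  intro n C₁ C₂ j₂ θ θ₁ θ₂
  have hn : (n : ℝ) = n₁ + n₂ := by push_cast [n]; rfl
  have hratio₁ : j₁ * (2 * n + 2) = j * (2 * n₁ + 1) := by
    exact_mod_cast (mul_eq_mul_iff_of_sub_add_div_eq (by positivity) (by positivity)).1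
      (hn ▸ hmatch)
  have hratio₂ : j₂ * (2 * n + 2) = j * (2 * n₂ + 1) := sub_mul_eq_mul_of_mul_eq_mul hratio₁
  have hj₁n₁ : j₁ ≤ n₁ := le_of_mul_eq_mul_of_le hj.2 hratio₁
  have hj₁j : j₁ < j := lt_of_mul_eq_mul_of_le (by omega) hj.1 hratio₁
  have hθ₁ : θ = θ₁ := by simp only [θ, θ₁, mul_div_assoc, hn, hmatch]
  have hθ₂ : θ = θ₂ := by
    have hdiv := (mul_eq_mul_iff_of_sub_add_div_eq (m := n₂) (k := j₂) (j := j) (N := n)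
      (by positivity) (by positivity)).2 (by exact_mod_cast hratio₂)
    simp only [θ, θ₂, mul_div_assoc, hdiv]
  have hshift : θ * (2 * n₁ + 1) = ((n₁ - j₁ : ℕ) : ℝ) * π + π / 2 :=
    hθ₁ ▸ pi_mul_sub_add_half_div_mul hj₁n₁
  have hC₁ : C₁ * √(2 / ((n₁ : ℝ) + 1 / 2)) = √(2 / ((n : ℝ) + 1)) :=
    sqrt_div_mul_sqrt_div_s10 (by positivity) (by positivity)
  have hC₂ : C₂ * √(2 / ((n₂ : ℝ) + 1 / 2)) = √(2 / ((n : ℝ) + 1)) :=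
    sqrt_div_mul_sqrt_div_s10 (by positivity) (by positivity)
  refine ⟨⟨by omega, le_of_mul_eq_mul_of_le hj.2 hratio₂, hθ₂, by rw [hθ₁], by rw [hθ₂]⟩,
    fun i _ _ => ⟨?_, ?_⟩, fun l _ _ => ?_, fun l _ _ => ?_⟩
  · rw [← hθ₁, ← mul_assoc, hC₁]
  · rw [← hθ₁, ← mul_assoc, hC₁]
  · rw [sin_two_mul_mul_add_of_mul_eq hshift, ← hθ₂, ← hC₂]
    ring
  · rw [cos_mul_two_mul_add_sub_one_of_mul_eq hshift, ← hθ₂, ← hC₂]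
    ring

/-- singular-value matching lemma, Open boundary case. -/
theorem stmt10 (n₁ n₂ : ℕ) (h₁ : 1 ≤ n₁) (h₂ : 1 ≤ n₂)
    (j j₁ : ℕ) (hj : 1 ≤ j ∧ j ≤ n₁ + n₂) (hj₁ : 1 ≤ j₁ ∧ j₁ ≤ n₁)
    (hmatch : (((n₁ : ℝ) + n₂) - j + 1) / (2 * (((n₁ : ℝ) + n₂) + 1)) =
      ((n₁ : ℝ) - j₁ + 1/2) / (2 * (n₁ : ℝ) + 1)) :
    let n : ℕ := n₁ + n₂
    let C₁ : ℝ := Real.sqrt ((2 * (n₁ : ℝ) + 1) / (2 * (n : ℝ) + 2))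
    let C₂ : ℝ := Real.sqrt ((2 * (n₂ : ℝ) + 1) / (2 * (n : ℝ) + 2))
    let j₂ : ℕ := j - j₁
    let θ : ℝ := π * ((n : ℝ) - j + 1) / (2 * ((n : ℝ) + 1))
    let θ₁ : ℝ := π * ((n₁ : ℝ) - j₁ + 1/2) / (2 * (n₁ : ℝ) + 1)
    let θ₂ : ℝ := π * ((n₂ : ℝ) - j₂ + 1/2) / (2 * (n₂ : ℝ) + 1)
    -- (i)
    (1 ≤ j₂ ∧ j₂ ≤ n₂ ∧ θ = θ₂ ∧
      2 * Real.sin θ = 2 * Real.sin θ₁ ∧ 2 * Real.sin θ = 2 * Real.sin θ₂) ∧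
    -- (ii)
    (∀ i : ℕ, 1 ≤ i → i ≤ n₁ →
      Real.sqrt (2 / ((n : ℝ) + 1)) * Real.sin (2 * θ * (i : ℝ)) =
        C₁ * (Real.sqrt (2 / ((n₁ : ℝ) + 1/2)) * Real.sin (2 * θ₁ * (i : ℝ))) ∧
      Real.sqrt (2 / ((n : ℝ) + 1)) * Real.cos (θ * (2 * (i : ℝ) - 1)) =
        C₁ * (Real.sqrt (2 / ((n₁ : ℝ) + 1/2)) * Real.cos (θ₁ * (2 * (i : ℝ) - 1)))) ∧
    -- (iii)
    (∀ l : ℕ, 1 ≤ l → l ≤ n₂ →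
      Real.sqrt (2 / ((n : ℝ) + 1)) * Real.sin (2 * θ * ((n₁ : ℝ) + l)) =
        (-1 : ℝ) ^ (n₁ - j₁) * (C₂ * (Real.sqrt (2 / ((n₂ : ℝ) + 1/2)) *
          Real.cos (θ₂ * (2 * (l : ℝ) - 1))))) ∧
    -- (iv)
    (∀ l : ℕ, 1 ≤ l → l ≤ n₂ + 1 →
      Real.sqrt (2 / ((n : ℝ) + 1)) * Real.cos (θ * (2 * ((n₁ : ℝ) + l) - 1)) =
        -((-1 : ℝ) ^ (n₁ - j₁)) * (C₂ * (Real.sqrt (2 / ((n₂ : ℝ) + 1/2)) *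
          Real.sin (2 * θ₂ * ((l : ℝ) - 1))))) :=
  stmt10_general n₁ n₂ j j₁ hj hmatch
end

section
/- (Explicit SVD of the diffusion matrix under zero-flux boundary conditions.) Let n ≥ 1 and let S_d = S_d(n; 0, 0). Define U ∈ ℝ^{n×n} by U_{i,j} = √(2/n)·cos(π(n−j)(2i−1)/(2n)) for 1 ≤ j ≤ n−1 and U_{i,n} = 1/√n; define V ∈ ℝ^{(n+1)×(n+1)} by V_{i,j} = −√(2/n)·sin(π(n−j)(i−1)/n) for 1 ≤ j ≤ n−1, with column n of V equal to the first standard basis vector e₁ and column n+1 equal to e_{n+1}; and let Σ be the n × (n+1) matrix with Σ_{j,j} = 2 sin(π(n−j)/(2n)) for 1 ≤ j ≤ n and all other entries 0. Then U and V are orthogonal matrices and S_d = U Σ Vᵀ. In particular S_d has rank n−1. -/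
/-!
The columns of `U` are the orthonormal DCT-II vectors and the generic columns of `V` the DST-I
vectors `i ↦ sin (π k i / n)`, `0 < k < n`. By the product-to-sum formulas, orthonormality of
both families reduces to the sums `∑ cos (π m (2i+1) / 2n)` and `∑ cos (π m i / n)` for integer
`0 < |m| < 2n`; multiplied by `2 sin (π m / 2n) ≠ 0` these telescope.

The zero-flux matrix `S_d(n; 0, 0)` has zero first and last columns, so it kills the columns `e₀`
and `eₙ` of `V`, and on vectors vanishing at both ends it acts as `v ↦ (vᵢ - vᵢ₊₁)ᵢ`. By a
product-to-sum formula this difference maps the sine vector of frequency `k` to `2 sin (π k / 2n)`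
times the cosine vector of frequency `k`, which gives `S_d V = U Σ`. The orthogonal factors preserve rank, and only the singular value of
frequency `0` vanishes.
-/
open Matrix Real
open scoped Matrix

noncomputable section

open Finset

lemma sum_range_cos_odd_mul_mul_two_mul_sin (θ : ℝ) (N : ℕ) :
    (∑ i ∈ range N, cos ((2 * i + 1) * θ)) * (2 * sin θ) = sin (2 * N * θ) := by
  induction N with
  | zero => simp
  | succ N ih =>
    have h := two_mul_sin_mul_cos θ ((2 * N + 1) * θ)
    rw [show θ - (2 * N + 1) * θ = -(2 * N * θ) by ring,
      show θ + (2 * N + 1) * θ = 2 * (N + 1) * θ by ring, sin_neg] at h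
    rw [sum_range_succ, add_mul, ih]
    push_cast
    linear_combination h

lemma sum_range_cos_even_mul_mul_two_mul_sin (θ : ℝ) (N : ℕ) :
    (∑ i ∈ range N, cos (2 * i * θ)) * (2 * sin θ) = sin ((2 * N - 1) * θ) + sin θ := by
  induction N with
  | zero => simp [neg_mul, sin_neg]
  | succ N ih =>
    have h := two_mul_sin_mul_cos θ (2 * N * θ)
    rw [show θ - 2 * N * θ = -((2 * N - 1) * θ) by ring,
      show θ + 2 * N * θ = (2 * (N + 1) - 1) * θ by ring, sin_neg] at h
    rw [sum_range_succ, add_mul, ih]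
    push_cast
    linear_combination h

lemma sin_pi_mul_intCast_div_ne_zero {n : ℕ} {m : ℤ} (hm : m ≠ 0) (hmn : |m| < 2 * n) :
    sin (π * m / (2 * n)) ≠ 0 := by
  have hn : (0 : ℝ) < 2 * n := by
    have : (0 : ℤ) < 2 * n := (abs_nonneg m).trans_lt hmn
    exact_mod_cast this
  have hmn' : |(m : ℝ)| < 2 * n := by exact_mod_cast hmn
  rw [Ne, sin_eq_zero_iff_of_lt_of_lt]
  · positivity
  · rw [lt_div_iff₀ hn]
    nlinarith [neg_abs_le (m : ℝ), pi_pos]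
  · rw [div_lt_iff₀ hn]
    nlinarith [le_abs_self (m : ℝ), pi_pos]

lemma sum_range_cos_pi_mul_odd {n : ℕ} {m : ℤ} (hmn : |m| < 2 * n) :
    ∑ i ∈ range n, cos (π * m * (2 * i + 1) / (2 * n)) = if m = 0 then n else 0 := by
  split_ifs with hm
  · simp [hm]
  have hsin := sin_pi_mul_intCast_div_ne_zero hm hmn
  have hn : (n : ℝ) ≠ 0 := by rintro h; simp_all
  have key := sum_range_cos_odd_mul_mul_two_mul_sin (π * m / (2 * n)) n
  rw [show 2 * (n : ℝ) * (π * m / (2 * n)) = m * π by field_simp, sin_int_mul_pi] at key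
  simp only [show ∀ i : ℕ, (2 * (i : ℝ) + 1) * (π * m / (2 * n)) = π * m * (2 * i + 1) / (2 * n)
    from fun i => by ring] at key
  simpa [hsin] using key

lemma sum_range_succ_cos_pi_mul {n : ℕ} {m : ℤ} (hmn : |m| < 2 * n) :
    ∑ i ∈ range (n + 1), cos (π * m * i / n) =
      if m = 0 then (n : ℝ) + 1 else (1 + cos (m * π)) / 2 := by
  split_ifs with hm
  · simp [hm]
  have hsin := sin_pi_mul_intCast_div_ne_zero hm hmn
  have hn : (n : ℝ) ≠ 0 := by rintro h; simp_all
  have key := sum_range_cos_even_mul_mul_two_mul_sin (π * m / (2 * n)) (n + 1)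
  rw [show (2 * ((n + 1 : ℕ) : ℝ) - 1) * (π * m / (2 * n)) = m * π + π * m / (2 * n) by
    push_cast; field_simp; ring, sin_add, sin_int_mul_pi] at key
  simp only [show ∀ i : ℕ, 2 * (i : ℝ) * (π * m / (2 * n)) = π * m * i / n
    from fun i => by field_simp] at key
  apply mul_right_cancel₀ (mul_ne_zero two_ne_zero hsin)
  rw [key]
  ring

lemma sum_range_cos_mul_cos {n k l : ℕ} (hk : k < n) (hl : l < n) :
    ∑ i ∈ range n, cos (π * k * (2 * i + 1) / (2 * n)) * cos (π * l * (2 * i + 1) / (2 * n)) =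
      if k = l then (if k = 0 then (n : ℝ) else n / 2) else 0 := by
  have hterm : ∀ i : ℕ,
      cos (π * k * (2 * i + 1) / (2 * n)) * cos (π * l * (2 * i + 1) / (2 * n)) =
        (cos (π * ((k - l : ℤ) : ℝ) * (2 * i + 1) / (2 * n)) +
          cos (π * ((k + l : ℤ) : ℝ) * (2 * i + 1) / (2 * n))) / 2 := by
    intro i
    push_cast
    linear_combination (norm := ring_nf)
      (two_mul_cos_mul_cos (π * k * (2 * i + 1) / (2 * n)) (π * l * (2 * i + 1) / (2 * n))) / 2
  rw [sum_congr rfl fun i _ => hterm i, ← sum_div, sum_add_distrib,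
    sum_range_cos_pi_mul_odd (abs_lt.mpr ⟨by omega, by omega⟩),
    sum_range_cos_pi_mul_odd (abs_lt.mpr ⟨by omega, by omega⟩)]
  by_cases hkl : k = l
  · subst hkl
    by_cases hk0 : k = 0 <;> simp [hk0]
  · have : (k : ℤ) - l ≠ 0 := by omega
    have : (k : ℤ) + l ≠ 0 := by omega
    simp [*]

lemma sum_range_succ_sin_mul_sin {n k l : ℕ} (hk : k < n) (hl : l < n) :
    ∑ i ∈ range (n + 1), sin (π * k * i / n) * sin (π * l * i / n) =
      if k = l then (if k = 0 then 0 else (n : ℝ) / 2) else 0 := by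
  have hterm : ∀ i : ℕ, sin (π * k * i / n) * sin (π * l * i / n) =
      (cos (π * ((k - l : ℤ) : ℝ) * i / n) - cos (π * ((k + l : ℤ) : ℝ) * i / n)) / 2 := by
    intro i
    push_cast
    linear_combination (norm := ring_nf)
      (two_mul_sin_mul_sin (π * k * i / n) (π * l * i / n)) / 2
  rw [sum_congr rfl fun i _ => hterm i, ← sum_div, sum_sub_distrib,
    sum_range_succ_cos_pi_mul (abs_lt.mpr ⟨by omega, by omega⟩),
    sum_range_succ_cos_pi_mul (abs_lt.mpr ⟨by omega, by omega⟩)]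
  by_cases hkl : k = l
  · subst hkl
    by_cases hk0 : k = 0
    · simp [hk0]
    · have : (k : ℤ) + k ≠ 0 := by omega
      have hcos : cos (((k + k : ℤ) : ℝ) * π) = 1 := by
        rw [← cos_nat_mul_two_pi k]; push_cast; ring_nf
      simp only [sub_self, if_true, this, if_false, hcos, hk0]
      ring
  · have : (k : ℤ) - l ≠ 0 := by omega
    have : (k : ℤ) + l ≠ 0 := by omega
    have hcos : cos ((k - l) * π) = cos ((k + l) * π) := by
      rw [← cos_add_nat_mul_two_pi _ l]; ring_nf
    simp [*]

lemma natCast_sub_one_sub {n j : ℕ} (h : j < n) : ((n - 1 - j : ℕ) : ℝ) = n - j - 1 := by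
  rw [eq_sub_iff_add_eq, eq_sub_iff_add_eq]
  exact_mod_cast (by omega : n - 1 - j + 1 + j = n)

def rectDiagonal {R : Type*} [Zero R] {m : ℕ} (d : Fin m → R) : Matrix (Fin m) (Fin (m + 1)) R :=
  Matrix.of fun i j => if (i : ℕ) = (j : ℕ) then d i else 0

section rectDiagonal

variable {R : Type*} {l : Type*} {m : ℕ}

lemma mul_rectDiagonal_apply_castSucc [NonUnitalNonAssocSemiring R] (A : Matrix l (Fin m) R)
    (d : Fin m → R) (i : l) (j : Fin m) : (A * rectDiagonal d) i j.castSucc = A i j * d j := by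
  rw [mul_apply, sum_eq_single j]
  · simp [rectDiagonal]
  · intro k _ hk
    simp [rectDiagonal, Fin.val_eq_val, hk]
  · simp

lemma mul_rectDiagonal_apply_last [NonUnitalNonAssocSemiring R] (A : Matrix l (Fin m) R)
    (d : Fin m → R) (i : l) : (A * rectDiagonal d) i (Fin.last m) = 0 := by
  rw [mul_apply]
  refine sum_eq_zero fun k _ => ?_
  simp [rectDiagonal, k.isLt.ne]

lemma rank_rectDiagonal [Field R] [LinearOrder R] [IsStrictOrderedRing R] [DecidableEq R]
    (d : Fin m → R) : (rectDiagonal d).rank = Fintype.card {i // d i ≠ 0} := by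
  have : rectDiagonal d * (rectDiagonal d)ᵀ = diagonal fun i => d i * d i := by
    ext i j
    rw [mul_apply, sum_eq_single i.castSucc]
    · by_cases h : i = j
      · simp [rectDiagonal, h]
      · simp [rectDiagonal, Fin.val_eq_val, h, Ne.symm h]
    · intro k _ hk
      have hik : (i : ℕ) ≠ k := fun h => hk (Fin.ext h.symm)
      simp [rectDiagonal, hik]
    · simp
  rw [← rank_self_mul_transpose, this, rank_diagonal]
  simp only [ne_eq, mul_self_eq_zero]

end rectDiagonal

lemma transpose_mul_self_apply_of_single {R m : Type*} [NonAssocSemiring R] [Fintype m]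
    [DecidableEq m] {V : Matrix m m R} {a j : m} (hcol : ∀ i, V i j = if i = a then 1 else 0)
    (hrow : ∀ j', V a j' = (1 : Matrix m m R) j j') (j' : m) :
    (Vᵀ * V) j j' = (1 : Matrix m m R) j j' := by
  simp only [mul_apply, transpose_apply, hcol, ite_mul, one_mul, zero_mul, sum_ite_eq',
    mem_univ, if_true, hrow]

lemma rank_mul_mul_transpose_of_orthogonal {R m p : Type*} [CommRing R] [Fintype m] [Fintype p]
    [DecidableEq m] [DecidableEq p] {U : Matrix m m R} {V : Matrix p p R}
    (hU : Uᵀ * U = 1) (hV : V * Vᵀ = 1) (A : Matrix m p R) : (U * A * Vᵀ).rank = A.rank := by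
  rw [Matrix.mul_assoc, rank_mul_eq_right_of_isUnit_det _ _ (isUnit_det_of_left_inverse hU),
    rank_mul_eq_left_of_isUnit_det _ _ (isUnit_det_of_left_inverse hV)]

lemma Sd_mulVec_apply_of_boundary_eq_zero {n : ℕ} (b₁ b₂ : ℝ) {v : Fin (n + 1) → ℝ} (h0 : v 0 = 0)
    (hlast : v (Fin.last n) = 0) (i : Fin n) :
    (Sd n b₁ b₂ *ᵥ v) i = v i.castSucc - v i.succ := by
  have hterm : ∀ k, Sd n b₁ b₂ i k * v k =
      (if k = i.castSucc then v k else 0) - (if k = i.succ then v k else 0) := by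
    intro k
    have hi := i.isLt
    simp only [Sd, of_apply, Fin.ext_iff, Fin.val_castSucc, Fin.val_succ]
    split_ifs with h₁ h₂ h₃ h₄ <;> try omega
    · rw [show k = 0 from Fin.ext (h₁.1.trans h₁.2), h0]; simp
    · simp
    · rw [show k = Fin.last n from Fin.ext (by simp; omega), hlast]; simp
    · simp
    · simp
  simp only [mulVec, dotProduct, hterm, sum_sub_distrib, sum_ite_eq', mem_univ, if_true]

lemma Sd_zero_zero_apply_zero {n : ℕ} (i : Fin n) : Sd n 0 0 i 0 = 0 := by
  simp only [Sd, of_apply, Fin.val_zero]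
  split_ifs <;> simp_all

lemma Sd_zero_zero_apply_last {n : ℕ} (i : Fin n) : Sd n 0 0 i (Fin.last n) = 0 := by
  have hi := i.isLt
  simp only [Sd, of_apply, Fin.val_last]
  split_ifs <;> first | omega | simp

def neumannU (n : ℕ) : Matrix (Fin n) (Fin n) ℝ := Matrix.of fun i j =>
  if (j : ℕ) = n - 1 then 1 / √n
  else √(2 / n) * cos (π * ((n : ℝ) - (j : ℕ) - 1) * (2 * ((i : ℕ) : ℝ) + 1) / (2 * n))

def neumannV (n : ℕ) : Matrix (Fin (n + 1)) (Fin (n + 1)) ℝ := Matrix.of fun i j =>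
  if (j : ℕ) = n - 1 then (if (i : ℕ) = 0 then 1 else 0)
  else if (j : ℕ) = n then (if (i : ℕ) = n then 1 else 0)
  else -(√(2 / n) * sin (π * ((n : ℝ) - (j : ℕ) - 1) * ((i : ℕ) : ℝ) / n))

def neumannSingularValue (n : ℕ) (i : Fin n) : ℝ :=
  2 * sin (π * ((n : ℝ) - (i : ℕ) - 1) / (2 * n))

section neumann

variable {n : ℕ}

lemma neumannU_apply (i j : Fin n) :
    neumannU n i j = (if (j : ℕ) = n - 1 then 1 / √n else √(2 / n)) *
      cos (π * (n - 1 - j : ℕ) * (2 * i + 1) / (2 * n)) := by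
  simp only [neumannU, of_apply]
  split_ifs with hj
  · simp [show n - 1 - j = 0 by omega]
  · rw [natCast_sub_one_sub j.isLt]

lemma neumannU_transpose_mul_self (hn : 1 ≤ n) : (neumannU n)ᵀ * neumannU n = 1 := by
  have hn' : (0 : ℝ) < n := by exact_mod_cast hn
  ext j j'
  have hsum := sum_range_cos_mul_cos (n := n) (k := n - 1 - j) (l := n - 1 - j')
    (by omega) (by omega)
  rw [← Fin.sum_univ_eq_sum_range] at hsum
  simp only [mul_apply, transpose_apply, neumannU_apply]
  rw [sum_congr rfl fun i _ => mul_mul_mul_comm _ _ _ _, ← mul_sum, hsum]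
  by_cases hjj : j = j'
  · subst hjj
    rw [if_pos rfl, one_apply_eq]
    by_cases hj : (j : ℕ) = n - 1
    · rw [if_pos hj, if_pos (by omega), one_div_mul_one_div, mul_self_sqrt hn'.le]
      field_simp
    · rw [if_neg hj, if_neg (by omega), mul_self_sqrt (by positivity)]
      field_simp
  · have := Fin.val_ne_of_ne hjj
    rw [if_neg (show n - 1 - j ≠ n - 1 - j' by omega), one_apply_ne hjj, mul_zero]

lemma neumannSingularValue_eq (j : Fin n) :
    neumannSingularValue n j = 2 * sin (π * (n - 1 - j : ℕ) / (2 * n)) := by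
  rw [neumannSingularValue, natCast_sub_one_sub j.isLt]

lemma neumannSingularValue_ne_zero_iff (j : Fin n) :
    neumannSingularValue n j ≠ 0 ↔ (j : ℕ) ≠ n - 1 := by
  rw [neumannSingularValue_eq]
  constructor
  · rintro h hj
    simp [hj] at h
  · intro hj
    have := sin_pi_mul_intCast_div_ne_zero (n := n) (m := (n - 1 - j : ℕ))
      (by omega) (by rw [Nat.abs_cast]; omega)
    rw [Int.cast_natCast] at this
    exact mul_ne_zero two_ne_zero this

lemma rank_rectDiagonal_neumannSingularValue (hn : 1 ≤ n) :
    (rectDiagonal (neumannSingularValue n)).rank = n - 1 := by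
  rw [rank_rectDiagonal, Fintype.card_congr (Equiv.subtypeEquivRight fun j =>
    (neumannSingularValue_ne_zero_iff j).trans (Fin.val_ne_iff (b := ⟨n - 1, by omega⟩))),
    Fintype.card_subtype_compl, Fintype.card_subtype_eq, Fintype.card_fin]

lemma neumannV_apply_of_lt {j : Fin (n + 1)} (hj : (j : ℕ) < n - 1) (i : Fin (n + 1)) :
    neumannV n i j = -(√(2 / n) * sin (π * (n - 1 - j : ℕ) * i / n)) := by
  rw [neumannV, of_apply, if_neg hj.ne, if_neg (by omega), natCast_sub_one_sub (by omega)]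

lemma neumannV_apply_of_eq_sub_one {j : Fin (n + 1)} (hj : (j : ℕ) = n - 1) (i : Fin (n + 1)) :
    neumannV n i j = if i = 0 then 1 else 0 := by
  simp only [neumannV, of_apply, if_pos hj, Fin.ext_iff, Fin.val_zero]

lemma neumannV_apply_last (hn : 1 ≤ n) (i : Fin (n + 1)) :
    neumannV n i (Fin.last n) = if i = Fin.last n then 1 else 0 := by
  simp only [neumannV, of_apply, Fin.val_last, if_neg (show n ≠ n - 1 by omega), if_true,
    Fin.ext_iff]

lemma neumannV_zero_apply (hn : 1 ≤ n) (j : Fin (n + 1)) :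
    neumannV n 0 j = if (j : ℕ) = n - 1 then 1 else 0 := by
  rcases (by omega : (j : ℕ) < n - 1 ∨ (j : ℕ) = n - 1 ∨ (j : ℕ) = n) with hj | hj | hj
  · simp [neumannV_apply_of_lt hj, hj.ne]
  · simp [neumannV_apply_of_eq_sub_one hj, hj]
  · rw [show j = Fin.last n from Fin.ext hj, neumannV_apply_last hn]
    simp [show n ≠ 0 by omega, show n ≠ n - 1 by omega]

lemma neumannV_last_apply (hn : 1 ≤ n) (j : Fin (n + 1)) :
    neumannV n (Fin.last n) j = if j = Fin.last n then 1 else 0 := by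
  rcases (by omega : (j : ℕ) < n - 1 ∨ (j : ℕ) = n - 1 ∨ (j : ℕ) = n) with hj | hj | hj
  · rw [neumannV_apply_of_lt hj, if_neg (Fin.ne_of_val_ne (by simp; omega)), Fin.val_last,
      show π * (n - 1 - j : ℕ) * n / n = (n - 1 - j : ℕ) * π by field_simp, sin_nat_mul_pi]
    simp
  · rw [neumannV_apply_of_eq_sub_one hj, if_neg (Fin.ne_of_val_ne (by simp; omega)),
      if_neg (Fin.ne_of_val_ne (by simp; omega))]
  · rw [show j = Fin.last n from Fin.ext hj, neumannV_apply_last hn, if_pos rfl]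

lemma neumannV_transpose_mul_self (hn : 1 ≤ n) : (neumannV n)ᵀ * neumannV n = 1 := by
  have hn' : (0 : ℝ) < n := by exact_mod_cast hn
  have hsingle : ∀ j : Fin (n + 1), ((j : ℕ) = n - 1 ∨ j = Fin.last n) →
      ∀ j', ((neumannV n)ᵀ * neumannV n) j j' = (1 : Matrix _ _ ℝ) j j' := by
    rintro j (hj | rfl)
    · refine transpose_mul_self_apply_of_single (neumannV_apply_of_eq_sub_one hj) fun j' => ?_
      simp only [neumannV_zero_apply hn, one_apply, Fin.ext_iff, hj, @eq_comm ℕ (n - 1)]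
    · refine transpose_mul_self_apply_of_single (neumannV_apply_last hn) fun j' => ?_
      simp only [neumannV_last_apply hn, one_apply, @eq_comm _ (Fin.last n)]
  ext j j'
  by_cases hj : (j : ℕ) = n - 1 ∨ j = Fin.last n
  · exact hsingle j hj j'
  by_cases hj' : (j' : ℕ) = n - 1 ∨ j' = Fin.last n
  · rw [← (isSymm_transpose_mul_self _).apply, ← isSymm_one.apply]
    exact hsingle j' hj' j
  replace hj : (j : ℕ) < n - 1 := by rw [Fin.ext_iff, Fin.val_last] at hj; omega
  replace hj' : (j' : ℕ) < n - 1 := by rw [Fin.ext_iff, Fin.val_last] at hj'; omega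
  have hsum := sum_range_succ_sin_mul_sin (n := n) (k := n - 1 - j) (l := n - 1 - j')
    (by omega) (by omega)
  rw [← Fin.sum_univ_eq_sum_range] at hsum
  simp only [mul_apply, transpose_apply, neumannV_apply_of_lt hj, neumannV_apply_of_lt hj',
    neg_mul_neg]
  rw [sum_congr rfl fun i _ => mul_mul_mul_comm _ _ _ _, ← mul_sum, hsum,
    mul_self_sqrt (by positivity)]
  by_cases hjj : j = j'
  · subst hjj
    rw [if_pos rfl, if_neg (by omega), one_apply_eq]
    field_simp
  · have := Fin.val_ne_of_ne hjj
    rw [if_neg (show n - 1 - j ≠ n - 1 - j' by omega), one_apply_ne hjj, mul_zero]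

lemma Sd_mul_neumannV (hn : 1 ≤ n) :
    Sd n 0 0 * neumannV n = neumannU n * rectDiagonal (neumannSingularValue n) := by
  ext i j
  induction j using Fin.lastCases with
  | last =>
    rw [mul_rectDiagonal_apply_last, mul_apply]
    simp only [neumannV_apply_last hn, mul_ite, mul_one, mul_zero, sum_ite_eq', mem_univ,
      if_true, Sd_zero_zero_apply_last]
  | cast j =>
    rw [mul_rectDiagonal_apply_castSucc]
    by_cases hj : (j : ℕ) = n - 1
    · rw [mul_apply]
      simp only [neumannV_apply_of_eq_sub_one (j := j.castSucc) hj, mul_ite, mul_one, mul_zero,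
        sum_ite_eq', mem_univ, if_true, Sd_zero_zero_apply_zero, neumannSingularValue_eq,
        show n - 1 - j = 0 by omega]
      simp
    · have hj' : (j.castSucc : ℕ) < n - 1 := by simp; omega
      change (Sd n 0 0 *ᵥ fun k => neumannV n k j.castSucc) i = _
      rw [Sd_mulVec_apply_of_boundary_eq_zero 0 0 (by rw [neumannV_zero_apply hn, if_neg hj'.ne])
        (by rw [neumannV_last_apply hn, if_neg (Fin.castSucc_ne_last j)]),
        neumannV_apply_of_lt hj', neumannV_apply_of_lt hj', neumannU_apply, if_neg hj,
        neumannSingularValue_eq, Fin.val_castSucc, Fin.val_castSucc]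
      set k : ℝ := ((n - 1 - j : ℕ) : ℝ)
      have h := two_mul_sin_mul_cos (π * k / (2 * n)) (π * k * (2 * i + 1) / (2 * n))
      rw [show π * k / (2 * n) - π * k * (2 * i + 1) / (2 * n) = -(π * k * i / n) by ring,
        show π * k / (2 * n) + π * k * (2 * i + 1) / (2 * n) = π * k * (i.succ : ℕ) / n by
          simp; ring, sin_neg] at h
      linear_combination (-√(2 / n)) * h

end neumann

/-- Indices run from 0, whereas in the informal statement they run from 1: column `j` there is
column `j - 1` here. -/
theorem stmt11 (n : ℕ) (hn : 1 ≤ n) :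
    let U : Matrix (Fin n) (Fin n) ℝ := Matrix.of fun i j =>
      if (j : ℕ) = n - 1 then 1 / Real.sqrt n
      else Real.sqrt (2 / n) *
        Real.cos (π * ((n : ℝ) - (j : ℕ) - 1) * (2 * ((i : ℕ) : ℝ) + 1) / (2 * n))
    let V : Matrix (Fin (n+1)) (Fin (n+1)) ℝ := Matrix.of fun i j =>
      if (j : ℕ) = n - 1 then (if (i : ℕ) = 0 then 1 else 0)
      else if (j : ℕ) = n then (if (i : ℕ) = n then 1 else 0)
      else -(Real.sqrt (2 / n) * Real.sin (π * ((n : ℝ) - (j : ℕ) - 1) * ((i : ℕ) : ℝ) / n))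
    let Sig : Matrix (Fin n) (Fin (n+1)) ℝ := Matrix.of fun i j =>
      if (i : ℕ) = (j : ℕ) then 2 * Real.sin (π * ((n : ℝ) - (i : ℕ) - 1) / (2 * n)) else 0
    Uᵀ * U = 1 ∧ U * Uᵀ = 1 ∧ Vᵀ * V = 1 ∧ V * Vᵀ = 1 ∧
      Sd n 0 0 = U * Sig * Vᵀ ∧ (Sd n 0 0).rank = n - 1 := by
  intro U V Sig
  have hU : Uᵀ * U = 1 := neumannU_transpose_mul_self hn
  have hV : Vᵀ * V = 1 := neumannV_transpose_mul_self hn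
  have hV' : V * Vᵀ = 1 := mul_eq_one_comm.mp hV
  have hSVD : Sd n 0 0 = U * Sig * Vᵀ := by
    have hSV : Sd n 0 0 * V = U * Sig := Sd_mul_neumannV hn
    rw [← hSV, Matrix.mul_assoc, hV', Matrix.mul_one]
  refine ⟨hU, mul_eq_one_comm.mp hU, hV, hV', hSVD, ?_⟩
  rw [hSVD, rank_mul_mul_transpose_of_orthogonal hU hV']
  exact rank_rectDiagonal_neumannSingularValue hn
end
end

section
/- Let n₁, n₂ ≥ 1, let u₁ ∈ ℝ^{n₁} and u₂ ∈ ℝ^{n₂} be unit vectors, and let a₁,…,a₆ ∈ ℝ with a₅ ≠ 0, a₆ ≠ 0, a₁ = a₃a₅/a₆ and a₄ = a₂a₆/a₅. Let A₁ be a k × m real matrix and v₁, v₂ ∈ ℝ^m. Then [[a₁·u₁u₁ᵀ ⊗ A₁, a₂·u₁u₂ᵀ ⊗ A₁],[a₃·u₂u₁ᵀ ⊗ A₁, a₄·u₂u₂ᵀ ⊗ A₁]] · [a₅·u₁ ⊗ v₁; a₆·u₂ ⊗ v₂] = [a₅·u₁; a₆·u₂] ⊗ ( A₁ (a₁ v₁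 + a₄ v₂) ). -/
open Matrix
open scoped Kronecker Matrix

/-! By the mixed-product rule, `(u wᵀ ⊗ A) (x ⊗ y) = (w ⬝ x) u ⊗ A y`, so for unit vectors the two
block rows reduce to `u₁ ⊗ A (a₁a₅ v₁ + a₂a₆ v₂)` and `u₂ ⊗ A (a₃a₅ v₁ + a₄a₆ v₂)`. The relations
between the coefficients say exactly `a₂a₆ = a₄a₅` and `a₃a₅ = a₁a₆`, which factor out `a₅` and `a₆`. -/

namespace Matrix

variable {R l m n p : Type*} [CommSemiring R] [Fintype m] [Fintype n]

theorem kronecker_mulVec_kronecker (B : Matrix l n R) (A : Matrix p m R) (x : n → R)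
    (y : m → R) :
    (B ⊗ₖ A) *ᵥ (fun q => x q.1 * y q.2) = fun q => (B *ᵥ x) q.1 * (A *ᵥ y) q.2 := by
  ext ⟨i, k⟩
  simp only [mulVec, dotProduct, kroneckerMap_apply, Fintype.sum_prod_type, Finset.sum_mul_sum]
  exact Finset.sum_congr rfl fun _ _ => Finset.sum_congr rfl fun _ _ => mul_mul_mul_comm ..

theorem smul_vecMulVec_kronecker_mulVec (c d : R) (u : l → R) (w x : n → R)
    (A : Matrix p m R) (y : m → R) :
    (c • (vecMulVec u w ⊗ₖ A)) *ᵥ (fun q => d * x q.1 * y q.2) =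
      fun q => c * d * (w ⬝ᵥ x) * u q.1 * (A *ᵥ y) q.2 := by
  have h := kronecker_mulVec_kronecker (vecMulVec u w) A (d • x) y
  simp only [Pi.smul_apply, smul_eq_mul] at h
  rw [smul_mulVec, h, vecMulVec_mulVec, dotProduct_smul]
  ext q
  simp only [Pi.smul_apply, smul_eq_mul, op_smul_eq_smul]
  ring

end Matrix

theorem stmt16_general (n₁ n₂ k m : ℕ)
    (u₁ : Fin n₁ → ℝ) (u₂ : Fin n₂ → ℝ)
    (hu₁ : ∑ i, u₁ i ^ 2 = 1) (hu₂ : ∑ i, u₂ i ^ 2 = 1)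
    (a₁ a₂ a₃ a₄ a₅ a₆ : ℝ) (h₅ : a₅ ≠ 0) (h₆ : a₆ ≠ 0)
    (ha₁ : a₁ = a₃ * a₅ / a₆) (ha₄ : a₄ = a₂ * a₆ / a₅)
    (A₁ : Matrix (Fin k) (Fin m) ℝ) (v₁ v₂ : Fin m → ℝ) :
    (fromBlocks (a₁ • (vecMulVec u₁ u₁ ⊗ₖ A₁)) (a₂ • (vecMulVec u₁ u₂ ⊗ₖ A₁))
        (a₃ • (vecMulVec u₂ u₁ ⊗ₖ A₁)) (a₄ • (vecMulVec u₂ u₂ ⊗ₖ A₁))) *ᵥ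
      Sum.elim (fun p : Fin n₁ × Fin m => a₅ * u₁ p.1 * v₁ p.2)
        (fun p : Fin n₂ × Fin m => a₆ * u₂ p.1 * v₂ p.2) =
      Sum.elim (fun p : Fin n₁ × Fin k => a₅ * u₁ p.1 * (A₁ *ᵥ (a₁ • v₁ + a₄ • v₂)) p.2)
        (fun p : Fin n₂ × Fin k => a₆ * u₂ p.1 * (A₁ *ᵥ (a₁ • v₁ + a₄ • v₂)) p.2) := by
  have h₂₆ : a₂ * a₆ = a₄ * a₅ := by rw [ha₄, div_mul_cancel₀ _ h₅]
  have h₃₅ : a₃ * a₅ = a₁ * a₆ := by rw [ha₁, div_mul_cancel₀ _ h₆]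
  have hu₁ : u₁ ⬝ᵥ u₁ = 1 := by simpa [dotProduct, sq] using hu₁
  have hu₂ : u₂ ⬝ᵥ u₂ = 1 := by simpa [dotProduct, sq] using hu₂
  rw [fromBlocks_mulVec, Sum.elim_comp_inl, Sum.elim_comp_inr]
  simp only [smul_vecMulVec_kronecker_mulVec, hu₁, hu₂, mulVec_add, mulVec_smul]
  congr 1 <;> ext q <;> simp only [Pi.add_apply, Pi.smul_apply, smul_eq_mul]
  · linear_combination u₁ q.1 * (A₁ *ᵥ v₂) q.2 * h₂₆
  · linear_combination u₂ q.1 * (A₁ *ᵥ v₁) q.2 * h₃₅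

/-- Kronecker product property (Property 3 of the paper). -/
theorem stmt16 (n₁ n₂ k m : ℕ) (h₁ : 1 ≤ n₁) (h₂ : 1 ≤ n₂)
    (u₁ : Fin n₁ → ℝ) (u₂ : Fin n₂ → ℝ)
    (hu₁ : ∑ i, u₁ i ^ 2 = 1) (hu₂ : ∑ i, u₂ i ^ 2 = 1)
    (a₁ a₂ a₃ a₄ a₅ a₆ : ℝ) (h₅ : a₅ ≠ 0) (h₆ : a₆ ≠ 0)
    (ha₁ : a₁ = a₃ * a₅ / a₆) (ha₄ : a₄ = a₂ * a₆ / a₅)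
    (A₁ : Matrix (Fin k) (Fin m) ℝ) (v₁ v₂ : Fin m → ℝ) :
    (fromBlocks (a₁ • (vecMulVec u₁ u₁ ⊗ₖ A₁)) (a₂ • (vecMulVec u₁ u₂ ⊗ₖ A₁))
        (a₃ • (vecMulVec u₂ u₁ ⊗ₖ A₁)) (a₄ • (vecMulVec u₂ u₂ ⊗ₖ A₁))) *ᵥ
      Sum.elim (fun p : Fin n₁ × Fin m => a₅ * u₁ p.1 * v₁ p.2)
        (fun p : Fin n₂ × Fin m => a₆ * u₂ p.1 * v₂ p.2) =
      Sum.elim (fun p : Fin n₁ × Fin k => a₅ * u₁ p.1 * (A₁ *ᵥ (a₁ • v₁ + a₄ • v₂)) p.2)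
        (fun p : Fin n₂ × Fin k => a₆ * u₂ p.1 * (A₁ *ᵥ (a₁ • v₁ + a₄ • v₂)) p.2) :=
  stmt16_general n₁ n₂ k m u₁ u₂ hu₁ hu₂ a₁ a₂ a₃ a₄ a₅ a₆ h₅ h₆ ha₁ ha₄ A₁ v₁ v₂
end
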